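/- arXiv:2604.19595 — 6 statements merged into one kernel-verified Lean document; each statement's English description precedes it below -/
import Mathlib

section
/- Assume (R) and let φ be a traveling-wave solution of u_t = P(u)_{xx} + g(u) on an open interval I with speed c. If φ is monotone, then for every ξ ∈ I_± such that g(φ(ξ)) ≠ 0, the profile φ is differentiable at ξ and φ'(ξ) ≠ 0. -/
open Set Filter MeasureTheory

noncomputable section

/-- `f` has a jump point at `ξ₀`: both one-sided limits exist, are finite, and differ. -/
def JumpPoint (f : ℝ → ℝ) (ξ₀ : ℝ) : Prop :=
  ∃ l r : ℝ, Tendsto f (nhdsWithin ξ₀ (Iio ξ₀)) (nhds l) ∧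
    Tendsto f (nhdsWithin ξ₀ (Ioi ξ₀)) (nhds r) ∧ l ≠ r

/-- The set of jump points of `f` lying in `I`. -/
def jumpSet (f : ℝ → ℝ) (I : Set ℝ) : Set ℝ := {ξ ∈ I | JumpPoint f ξ}

/-- Smooth, compactly supported test functions with support inside `I`. -/
def IsTestFun (I : Set ℝ) (ψ : ℝ → ℝ) : Prop :=
  ContDiff ℝ (⊤ : ℕ∞) ψ ∧ HasCompactSupport ψ ∧ tsupport ψ ⊆ I

/-- A traveling-wave solution of `u_t = P(u)_{xx} + g(u)` on the open interval `I`
with speed `c` and profile `φ`: `φ` is `[0,1]`-valued, continuous on `I` except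
possibly at finitely many jump points, and satisfies the weak (distributional)
formulation of `P(φ)'' + c φ' + g(φ) = 0` against all test functions. -/
structure IsTW (P g : ℝ → ℝ) (I : Set ℝ) (c : ℝ) (φ : ℝ → ℝ) : Prop where
  isOpen : IsOpen I
  ordConn : I.OrdConnected
  mapsTo : ∀ ξ ∈ I, φ ξ ∈ Icc (0:ℝ) 1
  jumps_finite : (jumpSet φ I).Finite
  cont : ContinuousOn φ (I \ jumpSet φ I)
  weak_eq : ∀ ψ : ℝ → ℝ, IsTestFun I ψ →
    ∫ ξ in I, P (φ ξ) * iteratedDeriv 2 ψ ξ =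
      c * (∫ ξ in I, φ ξ * deriv ψ ξ) - ∫ ξ in I, g (φ ξ) * ψ ξ

/-- A shock traveling wave: a traveling wave whose profile is not continuous. -/
def IsShockTW (P g : ℝ → ℝ) (I : Set ℝ) (c : ℝ) (φ : ℝ → ℝ) : Prop :=
  IsTW P g I c φ ∧ ¬ ContinuousOn φ I

/-- A wavefront: a global traveling wave with monotone non-constant profile whose
limits at `±∞` exist and are zeros of `g`. -/
def IsWavefront (P g : ℝ → ℝ) (c : ℝ) (φ : ℝ → ℝ) : Prop :=
  IsTW P g univ c φ ∧ (Monotone φ ∨ Antitone φ) ∧ (¬ ∃ k, ∀ ξ, φ ξ = k) ∧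
  ∃ l m : ℝ, Tendsto φ atBot (nhds l) ∧ Tendsto φ atTop (nhds m) ∧ g l = 0 ∧ g m = 0

/-- Condition (WF): `φ(−∞) = 1` and `φ(+∞) = 0`. -/
def CondWF (φ : ℝ → ℝ) : Prop :=
  Tendsto φ atBot (nhds 1) ∧ Tendsto φ atTop (nhds 0)

/-- A shock wavefront: a wavefront whose profile is not continuous. -/
def IsShockWavefront (P g : ℝ → ℝ) (c : ℝ) (φ : ℝ → ℝ) : Prop :=
  IsWavefront P g c φ ∧ ¬ ContinuousOn φ univ

/-- Condition (R): `P ∈ C²[0,1]`, `g ∈ C⁰[0,1]`, and `P' = D` and `g` have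
finitely many zeros in `[0,1]`. -/
def CondR (P g : ℝ → ℝ) : Prop :=
  ContDiffOn ℝ 2 P (Icc 0 1) ∧ ContinuousOn g (Icc 0 1) ∧
  {u ∈ Icc (0:ℝ) 1 | deriv P u = 0}.Finite ∧ {u ∈ Icc (0:ℝ) 1 | g u = 0}.Finite

/-- Condition (P): the diffusivity `D = P'` is positive on `(0,α) ∪ (β,1)` and
negative on `(α,β)`. -/
def CondP (P : ℝ → ℝ) (α β : ℝ) : Prop :=
  (∀ u ∈ Ioo (0:ℝ) α ∪ Ioo β 1, 0 < deriv P u) ∧ ∀ u ∈ Ioo α β, deriv P u < 0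

/-- Condition (g): `g(0) = g(1) = 0`, `g < 0` on `(0,γ)` and `g > 0` on `(γ,1)`. -/
def Condg (g : ℝ → ℝ) (γ : ℝ) : Prop :=
  g 0 = 0 ∧ g 1 = 0 ∧ (∀ u ∈ Ioo (0:ℝ) γ, g u < 0) ∧ ∀ u ∈ Ioo γ 1, 0 < g u

/-- `φ` has exactly one jump point, located at `ξs`, with left limit `φr` and
right limit `φl`. -/
def HasSingleJump (φ : ℝ → ℝ) (ξs φl φr : ℝ) : Prop :=
  jumpSet φ univ = {ξs} ∧
  Tendsto φ (nhdsWithin ξs (Iio ξs)) (nhds φr) ∧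
  Tendsto φ (nhdsWithin ξs (Ioi ξs)) (nhds φl)

/-- (Locally) absolutely continuous on `I`: an indefinite integral of a locally
integrable function. -/
def AbsContOn (F : ℝ → ℝ) (I : Set ℝ) : Prop :=
  ∃ h : ℝ → ℝ, LocallyIntegrableOn h I volume ∧
    ∀ a ∈ I, ∀ b ∈ I, F b - F a = ∫ t in a..b, h t

/-- The real interval `(−∞, a)`, `a ∈ ℝ ∪ {±∞}`. -/
def leftRay (a : EReal) : Set ℝ := {ξ : ℝ | (ξ : EReal) < a}

/-- The real interval `(a, +∞)`, `a ∈ ℝ ∪ {±∞}`. -/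
def rightRay (a : EReal) : Set ℝ := {ξ : ℝ | a < (ξ : EReal)}

/-- `φ(ξ) → L` as `ξ` tends to the right endpoint `a` of its domain. -/
def TendstoRightEnd (φ : ℝ → ℝ) (a : EReal) (L : ℝ) : Prop :=
  (a = ⊤ → Tendsto φ atTop (nhds L)) ∧
  ∀ x : ℝ, a = (x : EReal) → Tendsto φ (nhdsWithin x (Iio x)) (nhds L)

/-- `φ(ξ) → L` as `ξ` tends to the left endpoint `a` of its domain. -/
def TendstoLeftEnd (φ : ℝ → ℝ) (a : EReal) (L : ℝ) : Prop :=
  (a = ⊥ → Tendsto φ atBot (nhds L)) ∧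
  ∀ x : ℝ, a = (x : EReal) → Tendsto φ (nhdsWithin x (Ioi x)) (nhds L)

/-- A regular semi-wavefront from `1`: a regular traveling wave on `I = (−∞, a)`
with monotone non-constant profile tending to `1` at `−∞`. -/
def IsSemiWFfrom1 (P g : ℝ → ℝ) (a : EReal) (c : ℝ) (φ : ℝ → ℝ) : Prop :=
  IsTW P g (leftRay a) c φ ∧ ContinuousOn φ (leftRay a) ∧
  (MonotoneOn φ (leftRay a) ∨ AntitoneOn φ (leftRay a)) ∧
  (¬ ∃ k, ∀ ξ ∈ leftRay a, φ ξ = k) ∧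
  Tendsto φ atBot (nhds 1)

/-- A regular semi-wavefront to `0`: a regular traveling wave on `I = (a, +∞)`
with monotone non-constant profile tending to `0` at `+∞`. -/
def IsSemiWFto0 (P g : ℝ → ℝ) (a : EReal) (c : ℝ) (φ : ℝ → ℝ) : Prop :=
  IsTW P g (rightRay a) c φ ∧ ContinuousOn φ (rightRay a) ∧
  (MonotoneOn φ (rightRay a) ∨ AntitoneOn φ (rightRay a)) ∧
  (¬ ∃ k, ∀ ξ ∈ rightRay a, φ ξ = k) ∧
  Tendsto φ atTop (nhds 0)

/-!
Near `ξ` the profile is continuous, and the weak equation then says that `P(φ)` is `C¹` with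
`(P(φ)' + cφ)' = -g(φ)` in the classical sense (du Bois-Reymond). As `D(φ(ξ)) ≠ 0`, `P` has a
differentiable local inverse near `φ(ξ)`, so `φ = P⁻¹ ∘ P(φ)` is differentiable at `ξ`. If
`φ'(ξ) = 0`, then `G := P(φ)'` vanishes at `ξ` with `G'(ξ) = -g(φ(ξ)) ≠ 0`, so `G` changes sign
at `ξ`; but `P(φ)` is monotone near `ξ`, being a monotone function of the monotone `φ`, so `G`
keeps one sign there.

For `P` to be differentiable around `φ(ξ)` we need `0 < φ(ξ) < 1`: if `φ(ξ)` were `0` or `1`,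
monotonicity would make `φ` constant on one side of `ξ`, and the equation would force
`g(φ(ξ)) = 0` there.
-/

open Topology

namespace IsTestFun

variable {U : Set ℝ} {θ : ℝ → ℝ}

lemma continuous (hθ : IsTestFun U θ) : Continuous θ := hθ.1.continuous

lemma integrable (hθ : IsTestFun U θ) : Integrable θ :=
  hθ.continuous.integrable_of_hasCompactSupport hθ.2.1

lemma hasDerivAt (hθ : IsTestFun U θ) (x : ℝ) : HasDerivAt θ (deriv θ x) x :=
  (hθ.1.differentiable (by simp) x).hasDerivAt

lemma deriv (hθ : IsTestFun U θ) : IsTestFun U (deriv θ) :=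
  ⟨(contDiff_infty_iff_deriv.1 hθ.1).2, hθ.2.1.deriv, tsupport_deriv_subset.trans hθ.2.2⟩

lemma eq_zero_of_notMem (hθ : IsTestFun U θ) {x : ℝ} (hx : x ∉ U) : θ x = 0 :=
  image_eq_zero_of_notMem_tsupport fun h => hx (hθ.2.2 h)

lemma mono {V : Set ℝ} (hθ : IsTestFun U θ) (hUV : U ⊆ V) : IsTestFun V θ :=
  ⟨hθ.1, hθ.2.1, hθ.2.2.trans hUV⟩

lemma sub_smul {η : ℝ → ℝ} (hθ : IsTestFun U θ) (hη : IsTestFun U η) (r : ℝ) :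
    IsTestFun U (θ - r • η) :=
  ⟨hθ.1.sub (hη.1.const_smul r), hθ.2.1.sub hη.2.1.smul_left,
    (tsupport_sub _ _).trans <| union_subset hθ.2.2 <|
      (tsupport_smul_subset_right (fun _ => r) η).trans hη.2.2⟩

lemma integrable_mul {K : ℝ → ℝ} (hθ : IsTestFun U θ) (hU : IsOpen U)
    (hK : ContinuousOn K U) : Integrable (fun x => K x * θ x) :=
  ((hK.mul hθ.continuous.continuousOn).continuous_of_tsupport_subset hU
    (tsupport_mul_subset_right.trans hθ.2.2)).integrable_of_hasCompactSupport hθ.2.1.mul_left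

lemma integral_mul_sub_smul {K η : ℝ → ℝ} (hU : IsOpen U) (hK : ContinuousOn K U)
    (hθ : IsTestFun U θ) (hη : IsTestFun U η) (r : ℝ) :
    ∫ x, K x * (θ - r • η) x = (∫ x, K x * θ x) - r * ∫ x, K x * η x := by
  simp only [Pi.sub_apply, Pi.smul_apply, smul_eq_mul, mul_sub, mul_left_comm (K _) r]
  rw [integral_sub (hθ.integrable_mul hU hK) ((hη.integrable_mul hU hK).const_mul r),
    integral_const_mul]

end IsTestFun

lemma integral_sub_integral_smul_eq_zero {θ η : ℝ → ℝ} (hθ : Integrable θ) (hη : Integrable η)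
    (hη1 : ∫ x, η x = 1) : ∫ x, (θ - (∫ y, θ y) • η) x = 0 := by
  simp only [Pi.sub_apply, Pi.smul_apply, smul_eq_mul]
  rw [integral_sub hθ (hη.const_mul _), integral_const_mul, hη1, mul_one, sub_self]

lemma eqOn_zero_of_integral_mul_eq_zero {U : Set ℝ} {K : ℝ → ℝ} (hU : IsOpen U)
    (hK : ContinuousOn K U) (h : ∀ θ, IsTestFun U θ → ∫ x, K x * θ x = 0) : EqOn K 0 U := by
  have hae := hU.ae_eq_zero_of_integral_contDiff_smul_eq_zero
    (hK.locallyIntegrableOn hU.measurableSet)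
    fun θ hθ hθc hθU => by simpa [mul_comm] using h θ ⟨hθ, hθc, hθU⟩
  refine Measure.eqOn_open_of_ae_eq (μ := volume) ?_ hU hK continuousOn_const
  rw [EventuallyEq, ae_restrict_iff' hU.measurableSet]
  exact hae

lemma integral_mul_deriv_eq_neg_of_isTestFun {U : Set ℝ} {M L θ : ℝ → ℝ} (hU : IsOpen U)
    (hM : ∀ x ∈ U, HasDerivAt M (L x) x) (hL : ContinuousOn L U) (hθ : IsTestFun U θ) :
    ∫ x, M x * deriv θ x = -∫ x, L x * θ x := by
  have hMc : ContinuousOn M U := fun x hx => (hM x hx).continuousAt.continuousWithinAt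
  exact integral_mul_deriv_eq_deriv_mul_of_integrable (fun x hx => hM x (hθ.2.2 hx))
    (fun x _ => hθ.hasDerivAt x) (hθ.deriv.integrable_mul hU hMc) (hθ.integrable_mul hU hL)
    (hθ.integrable_mul hU hMc)

section Interval

variable {a b : ℝ}

lemma IsCompact.exists_Ioo_superset {K : Set ℝ} (hK : IsCompact K) (hKab : K ⊆ Ioo a b) :
    ∃ c d, a < c ∧ d < b ∧ K ⊆ Ioo c d := by
  obtain ⟨δ, hδ, hδK⟩ := hK.exists_cthickening_subset_open isOpen_Ioo hKab
  refine ⟨a + δ, b - δ, by linarith, by linarith, fun x hx => ?_⟩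
  have hl := hδK (Metric.mem_cthickening_of_dist_le (x - δ) x δ K hx (by simp [abs_of_pos hδ]))
  have hr := hδK (Metric.mem_cthickening_of_dist_le (x + δ) x δ K hx (by simp [abs_of_pos hδ]))
  exact ⟨by linarith [hl.1], by linarith [hr.2]⟩

lemma exists_isTestFun_integral_eq_one (hab : a < b) :
    ∃ η : ℝ → ℝ, IsTestFun (Ioo a b) η ∧ ∫ x, η x = 1 := by
  let f : ContDiffBump ((a + b) / 2) := ⟨(b - a) / 8, (b - a) / 4, by linarith, by linarith⟩
  refine ⟨f.normed volume, ⟨f.contDiff_normed, f.hasCompactSupport_normed, ?_⟩,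
    f.integral_normed⟩
  intro x hx
  rw [f.tsupport_normed_eq, Metric.mem_closedBall, Real.dist_eq, abs_le] at hx
  obtain ⟨h1, h2⟩ := hx
  simp only [f] at h1 h2
  constructor <;> linarith

lemma exists_isTestFun_deriv_eq_of_integral_eq_zero {θ : ℝ → ℝ} (hθ : IsTestFun (Ioo a b) θ)
    (h0 : ∫ x, θ x = 0) : ∃ ψ, IsTestFun (Ioo a b) ψ ∧ deriv ψ = θ := by
  obtain ⟨c, d, hac, hdb, hcd⟩ := hθ.2.1.isCompact.exists_Ioo_superset hθ.2.2
  have hθcd : ∀ x ∉ Ioo c d, θ x = 0 := fun x hx =>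
    image_eq_zero_of_notMem_tsupport (hx <| hcd ·)
  set ψ : ℝ → ℝ := fun x => ∫ t in c..x, θ t
  have hψ : ∀ x, HasDerivAt ψ (θ x) x := fun x =>
    (hθ.continuous.integral_hasStrictDerivAt c x).hasDerivAt
  have hderiv : deriv ψ = θ := funext fun x => (hψ x).deriv
  have hψcd : ∀ x ∉ Ioo c d, ψ x = 0 := by
    intro x hx
    rcases le_or_gt x c with hxc | hcx
    · refine intervalIntegral.integral_zero_ae (.of_forall fun t ht => hθcd t ?_)
      rw [uIoc_of_ge hxc] at ht
      exact fun h => h.1.not_ge ht.2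
    · have hdx : d ≤ x := not_lt.1 fun h => hx ⟨hcx, h⟩
      show ∫ t in c..x, θ t = 0
      rw [← h0, intervalIntegral.integral_of_le hcx.le]
      refine setIntegral_eq_integral_of_forall_compl_eq_zero fun t ht => hθcd t fun h => ht ?_
      exact ⟨h.1, h.2.le.trans hdx⟩
  have hsupp : tsupport ψ ⊆ Icc c d :=
    closure_minimal (fun x hx => Ioo_subset_Icc_self (not_imp_comm.1 (hψcd x) hx)) isClosed_Icc
  refine ⟨ψ, ⟨?_, ?_, hsupp.trans (Icc_subset_Ioo hac hdb)⟩, hderiv⟩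
  · exact contDiff_infty_iff_deriv.2 ⟨fun x => (hψ x).differentiableAt, hderiv ▸ hθ.1⟩
  · exact .of_support_subset_isCompact isCompact_Icc ((subset_tsupport ψ).trans hsupp)

lemma exists_eqOn_const_of_integral_mul_deriv_eq_zero {K : ℝ → ℝ} (hab : a < b)
    (hK : ContinuousOn K (Ioo a b))
    (h : ∀ θ, IsTestFun (Ioo a b) θ → ∫ x, K x * deriv θ x = 0) :
    ∃ C, EqOn K (fun _ => C) (Ioo a b) := by
  obtain ⟨η, hη, hη1⟩ := exists_isTestFun_integral_eq_one hab
  refine ⟨∫ x, K x * η x, fun x hx => sub_eq_zero.1 <|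
    eqOn_zero_of_integral_mul_eq_zero isOpen_Ioo (hK.sub continuousOn_const) (fun θ hθ => ?_) hx⟩
  obtain ⟨ψ, hψ, hψθ⟩ := exists_isTestFun_deriv_eq_of_integral_eq_zero (hθ.sub_smul hη _)
    (integral_sub_integral_smul_eq_zero hθ.integrable hη.integrable hη1)
  have hψ0 := h ψ hψ
  rw [hψθ, hθ.integral_mul_sub_smul isOpen_Ioo hK hη] at hψ0
  simp only [Pi.sub_apply, sub_mul]
  rw [integral_sub (hθ.integrable_mul isOpen_Ioo hK) (hθ.integrable.const_mul _),
    integral_const_mul]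
  linarith

lemma ContinuousOn.exists_hasDerivAt_Ioo {L : ℝ → ℝ} (hL : ContinuousOn L (Ioo a b)) :
    ∃ M : ℝ → ℝ, ∀ x ∈ Ioo a b, HasDerivAt M (L x) x := by
  rcases (Ioo a b).eq_empty_or_nonempty with h | ⟨x₀, hx₀⟩
  · exact ⟨0, by simp [h]⟩
  refine ⟨fun x => ∫ t in x₀..x, L t, fun x hx => ?_⟩
  exact intervalIntegral.integral_hasDerivAt_right
    ((hL.mono (ordConnected_Ioo.uIcc_subset hx₀ hx)).intervalIntegrable)
    (hL.stronglyMeasurableAtFilter isOpen_Ioo x hx) (hL.continuousAt (isOpen_Ioo.mem_nhds hx))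

lemma hasDerivAt_of_integral_mul_deriv_eq_neg {K L : ℝ → ℝ} (hab : a < b)
    (hK : ContinuousOn K (Ioo a b)) (hL : ContinuousOn L (Ioo a b))
    (h : ∀ θ, IsTestFun (Ioo a b) θ → ∫ x, K x * deriv θ x = -∫ x, L x * θ x) :
    ∀ x ∈ Ioo a b, HasDerivAt K (L x) x := by
  obtain ⟨M, hM⟩ := hL.exists_hasDerivAt_Ioo
  have hMc : ContinuousOn M (Ioo a b) := fun x hx => (hM x hx).continuousAt.continuousWithinAt
  obtain ⟨C, hC⟩ := exists_eqOn_const_of_integral_mul_deriv_eq_zero hab (hK.sub hMc)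
    fun θ hθ => by
      simp only [Pi.sub_apply, sub_mul]
      rw [integral_sub (hθ.deriv.integrable_mul isOpen_Ioo hK)
          (hθ.deriv.integrable_mul isOpen_Ioo hMc),
        h θ hθ, integral_mul_deriv_eq_neg_of_isTestFun isOpen_Ioo hM hL hθ, sub_self]
  intro x hx
  refine ((hM x hx).add_const C).congr_of_eventuallyEq ?_
  filter_upwards [isOpen_Ioo.mem_nhds hx] with y hy
  linarith [hC hy, show (K - M) y = K y - M y from rfl]

/-- Testing only against second derivatives determines `K'` up to a constant: the `ψ'` are
exactly the test functions of zero mean. -/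
lemma exists_hasDerivAt_of_integral_mul_deriv_deriv_eq_neg {K L : ℝ → ℝ} (hab : a < b)
    (hK : ContinuousOn K (Ioo a b)) (hL : ContinuousOn L (Ioo a b))
    (h : ∀ ψ, IsTestFun (Ioo a b) ψ →
      ∫ x, K x * deriv (deriv ψ) x = -∫ x, L x * deriv ψ x) :
    ∃ k, ∀ x ∈ Ioo a b, HasDerivAt K (L x + k) x := by
  obtain ⟨η, hη, hη1⟩ := exists_isTestFun_integral_eq_one hab
  refine ⟨-((∫ x, K x * deriv η x) + ∫ x, L x * η x),
    hasDerivAt_of_integral_mul_deriv_eq_neg hab hK (hL.add continuousOn_const) fun θ hθ => ?_⟩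
  obtain ⟨ψ, hψ, hψθ⟩ := exists_isTestFun_deriv_eq_of_integral_eq_zero (hθ.sub_smul hη _)
    (integral_sub_integral_smul_eq_zero hθ.integrable hη.integrable hη1)
  have hψ0 := h ψ hψ
  have hderiv : deriv (θ - (∫ y, θ y) • η) = deriv θ - (∫ y, θ y) • deriv η := by
    ext x
    exact ((hθ.hasDerivAt x).sub ((hη.hasDerivAt x).const_smul _)).deriv
  rw [hψθ, hderiv, hθ.deriv.integral_mul_sub_smul isOpen_Ioo hK hη.deriv,
    hθ.integral_mul_sub_smul isOpen_Ioo hL hη] at hψ0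
  simp only [add_mul]
  rw [integral_add (hθ.integrable_mul isOpen_Ioo hL) (hθ.integrable.const_mul _),
    integral_const_mul]
  linarith

lemma eqOn_Ioo_left_or_right_of_isExtrOn {φ : ℝ → ℝ} {ξ : ℝ}
    (hmono : MonotoneOn φ (Ioo a b) ∨ AntitoneOn φ (Ioo a b)) (hξ : ξ ∈ Ioo a b)
    (hext : IsExtrOn φ (Ioo a b) ξ) :
    EqOn φ (fun _ => φ ξ) (Ioo a ξ) ∨ EqOn φ (fun _ => φ ξ) (Ioo ξ b) := by
  have hl : ∀ x ∈ Ioo a ξ, x ∈ Ioo a b := fun x hx => ⟨hx.1, hx.2.trans hξ.2⟩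
  have hr : ∀ x ∈ Ioo ξ b, x ∈ Ioo a b := fun x hx => ⟨hξ.1.trans hx.1, hx.2⟩
  rcases hmono with hm | hm <;> rcases hext with he | he
  · exact .inl fun x hx => le_antisymm (hm (hl x hx) hξ hx.2.le) (isMinOn_iff.1 he x (hl x hx))
  · exact .inr fun x hx => le_antisymm (isMaxOn_iff.1 he x (hr x hx)) (hm hξ (hr x hx) hx.1.le)
  · exact .inr fun x hx => le_antisymm (hm hξ (hr x hx) hx.1.le) (isMinOn_iff.1 he x (hr x hx))
  · exact .inl fun x hx => le_antisymm (isMaxOn_iff.1 he x (hl x hx)) (hm (hl x hx) hξ hx.2.le)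

end Interval

lemma accPt_of_mem_nhds {X : Type*} [TopologicalSpace X] {x : X} [(𝓝[≠] x).NeBot]
    {t : Set X} (ht : t ∈ 𝓝 x) : AccPt x (𝓟 t) := by
  rw [accPt_principal_iff_nhdsWithin, sdiff_eq, inter_comm,
    nhdsWithin_inter_of_mem' (mem_nhdsWithin_of_mem_nhds ht)]
  infer_instance

lemma eq_zero_of_hasDerivAt_of_monotoneOn {F G : ℝ → ℝ} {t : Set ℝ} {ξ G' : ℝ}
    (ht : t ∈ 𝓝 ξ) (hF : MonotoneOn F t ∨ AntitoneOn F t)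
    (hFG : ∀ᶠ x in 𝓝 ξ, HasDerivAt F (G x) x) (hGξ : G ξ = 0) (hG : HasDerivAt G G' ξ) :
    G' = 0 := by
  have hev : ∀ᶠ x in 𝓝 ξ, t ∈ 𝓝 x ∧ HasDerivAt F (G x) x :=
    (eventually_mem_nhds_iff.2 ht).and hFG
  rcases hF with hF | hF
  · refine IsLocalMin.hasDerivAt_eq_zero ?_ hG
    filter_upwards [hev] with x ⟨hx, hd⟩
    exact hGξ ▸ hd.hasDerivWithinAt.nonneg_of_monotoneOn (accPt_of_mem_nhds hx) hF
  · refine IsLocalMax.hasDerivAt_eq_zero ?_ hG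
    filter_upwards [hev] with x ⟨hx, hd⟩
    exact hGξ ▸ hd.hasDerivWithinAt.nonpos_of_antitoneOn (accPt_of_mem_nhds hx) hF

lemma monotoneOn_or_antitoneOn_comp {α β γ : Type*} [Preorder α] [Preorder β] [Preorder γ]
    {f : α → β} {g : β → γ} {s : Set β} {t : Set α}
    (hg : MonotoneOn g s ∨ AntitoneOn g s) (hf : MonotoneOn f t ∨ AntitoneOn f t)
    (hst : MapsTo f t s) : MonotoneOn (g ∘ f) t ∨ AntitoneOn (g ∘ f) t := by
  rcases hg with hg | hg <;> rcases hf with hf | hf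
  · exact .inl (hg.comp hf hst)
  · exact .inr (hg.comp_AntitoneOn hf hst)
  · exact .inr (hg.comp_MonotoneOn hf hst)
  · exact .inl (hg.comp hf hst)

lemma HasStrictDerivAt.exists_monotoneOn_or_antitoneOn {f : ℝ → ℝ} {f' x : ℝ}
    (hf : HasStrictDerivAt f f' x) (hf' : f' ≠ 0) :
    ∃ s ∈ 𝓝 x, MonotoneOn f s ∨ AntitoneOn f s := by
  set e := (hf.hasStrictFDerivAt_equiv hf').toOpenPartialHomeomorph f
  obtain ⟨ε, hε, hball⟩ := Metric.isOpen_iff.1 e.open_source x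
    (hf.hasStrictFDerivAt_equiv hf').mem_toOpenPartialHomeomorph_source
  rw [Real.ball_eq_Ioo] at hball
  refine ⟨Ioo (x - ε) (x + ε), Ioo_mem_nhds (by linarith) (by linarith), ?_⟩
  have hinj : InjOn f (Ioo (x - ε) (x + ε)) := e.injOn.mono hball
  have hcont : ContinuousOn f (Ioo (x - ε) (x + ε)) := e.continuousOn.mono hball
  exact (hcont.strictMonoOn_of_injOn_Ioo (by linarith) hinj).imp StrictMonoOn.monotoneOn
    StrictAntiOn.antitoneOn

lemma HasStrictDerivAt.differentiableAt_of_comp {P φ : ℝ → ℝ} {ξ p' : ℝ}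
    (hP : HasStrictDerivAt P p' (φ ξ)) (hp' : p' ≠ 0) (hφ : ContinuousAt φ ξ)
    (hPφ : DifferentiableAt ℝ (fun x => P (φ x)) ξ) : DifferentiableAt ℝ φ ξ := by
  have hev : φ =ᶠ[𝓝 ξ] fun x => hP.localInverse P p' (φ ξ) hp' (P (φ x)) :=
    (hφ.eventually (hP.hasStrictFDerivAt_equiv hp').eventually_left_inverse).mono
      fun _ h => h.symm
  exact ((hP.to_localInverse hp').hasDerivAt.differentiableAt.comp ξ hPφ).congr_of_eventuallyEq
    hev

structure IsClassicalTW (P g : ℝ → ℝ) (U : Set ℝ) (c : ℝ) (φ G : ℝ → ℝ) : Prop where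
  hasDerivAt_comp : ∀ x ∈ U, HasDerivAt (fun y => P (φ y)) (G x) x
  hasDerivAt_flux : ∀ x ∈ U, HasDerivAt (fun y => G y + c * φ y) (-g (φ x)) x

section TravelingWave

variable {P g φ G : ℝ → ℝ} {I U : Set ℝ} {c a b ξ : ℝ}

lemma IsTW.integral_eq_of_isTestFun (hTW : IsTW P g I c φ) (hUI : U ⊆ I) {ψ : ℝ → ℝ}
    (hψ : IsTestFun U ψ) :
    ∫ x, P (φ x) * deriv (deriv ψ) x = c * (∫ x, φ x * deriv ψ x) - ∫ x, g (φ x) * ψ x := by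
  have hψI := hψ.mono hUI
  have hweak := hTW.weak_eq ψ hψI
  rw [iteratedDeriv_succ, iteratedDeriv_one] at hweak
  rwa [setIntegral_eq_integral_of_forall_compl_eq_zero
      fun x hx => by rw [hψI.deriv.deriv.eq_zero_of_notMem hx, mul_zero],
    setIntegral_eq_integral_of_forall_compl_eq_zero
      fun x hx => by rw [hψI.deriv.eq_zero_of_notMem hx, mul_zero],
    setIntegral_eq_integral_of_forall_compl_eq_zero
      fun x hx => by rw [hψI.eq_zero_of_notMem hx, mul_zero]] at hweak

lemma IsTW.exists_isClassicalTW (hP : ContinuousOn P (Icc 0 1)) (hg : ContinuousOn g (Icc 0 1))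
    (hTW : IsTW P g I c φ) (hab : a < b) (hJ : Ioo a b ⊆ I \ jumpSet φ I) :
    ∃ G, IsClassicalTW P g (Ioo a b) c φ G := by
  have hφ : ContinuousOn φ (Ioo a b) := hTW.cont.mono hJ
  have hφ01 : MapsTo φ (Ioo a b) (Icc 0 1) := fun x hx => hTW.mapsTo x (hJ hx).1
  have hPφ : ContinuousOn (fun x => P (φ x)) (Ioo a b) := hP.comp hφ hφ01
  have hgφ : ContinuousOn (fun x => g (φ x)) (Ioo a b) := hg.comp hφ hφ01
  obtain ⟨Q, hQ⟩ := hgφ.exists_hasDerivAt_Ioo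
  have hQc : ContinuousOn Q (Ioo a b) := fun x hx => (hQ x hx).continuousAt.continuousWithinAt
  obtain ⟨k, hk⟩ := exists_hasDerivAt_of_integral_mul_deriv_deriv_eq_neg
    (L := fun x => -(c * φ x + Q x)) hab hPφ ((continuousOn_const.mul hφ).add hQc).neg
    fun ψ hψ => by
      simp only [neg_mul, integral_neg, neg_neg, add_mul, mul_assoc]
      rw [hTW.integral_eq_of_isTestFun (hJ.trans sdiff_subset) hψ,
        integral_add ((hψ.deriv.integrable_mul isOpen_Ioo hφ).const_mul c)
          (hψ.deriv.integrable_mul isOpen_Ioo hQc),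
        integral_const_mul, integral_mul_deriv_eq_neg_of_isTestFun isOpen_Ioo hQ hgφ hψ]
      rfl
  refine ⟨fun x => -(c * φ x + Q x) + k, hk, fun x hx => ?_⟩
  have hflux : (fun y => -(c * φ y + Q y) + k + c * φ y) = fun y => k + -Q y := by
    ext y
    ring
  rw [hflux]
  exact (hQ x hx).neg.const_add k

namespace IsClassicalTW

lemma apply_eq_zero_of_eqOn {s : Set ℝ} {x v : ℝ} (h : IsClassicalTW P g U c φ G)
    (hs : IsOpen s) (hsU : s ⊆ U) (hx : x ∈ s) (hφ : EqOn φ (fun _ => v) s) : g v = 0 := by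
  have hG : EqOn G 0 s := fun y hy => (h.hasDerivAt_comp y (hsU hy)).unique <|
    (hasDerivAt_const y (P v)).congr_of_eventuallyEq <| by
      filter_upwards [hs.mem_nhds hy] with z hz
      rw [hφ hz]
  have hflux : HasDerivAt (fun y => G y + c * φ y) 0 x :=
    (hasDerivAt_const x (c * v)).congr_of_eventuallyEq <| by
      filter_upwards [hs.mem_nhds hx] with z hz
      rw [hG hz, hφ hz, Pi.zero_apply, zero_add]
  have := (h.hasDerivAt_flux x (hsU hx)).unique hflux
  rwa [hφ hx, neg_eq_zero] at this

lemma mem_Ioo_of_monotoneOn (h : IsClassicalTW P g (Ioo a b) c φ G)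
    (hmono : MonotoneOn φ (Ioo a b) ∨ AntitoneOn φ (Ioo a b))
    (hφ01 : MapsTo φ (Ioo a b) (Icc 0 1)) (hξ : ξ ∈ Ioo a b) (hg : g (φ ξ) ≠ 0) :
    φ ξ ∈ Ioo 0 1 := by
  obtain ⟨h0, h1⟩ := hφ01 hξ
  by_contra hξ01
  have hext : IsExtrOn φ (Ioo a b) ξ := by
    rcases h0.eq_or_lt with h0 | h0
    · exact .inl (isMinOn_iff.2 fun x hx => h0 ▸ (hφ01 hx).1)
    · have h1 : φ ξ = 1 := h1.eq_or_lt.resolve_right fun h1 => hξ01 ⟨h0, h1⟩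
      exact .inr (isMaxOn_iff.2 fun x hx => h1 ▸ (hφ01 hx).2)
  rcases eqOn_Ioo_left_or_right_of_isExtrOn hmono hξ hext with hconst | hconst
  · obtain ⟨x, hx⟩ := exists_between hξ.1
    exact hg (h.apply_eq_zero_of_eqOn isOpen_Ioo (Ioo_subset_Ioo_right hξ.2.le) hx hconst)
  · obtain ⟨x, hx⟩ := exists_between hξ.2
    exact hg (h.apply_eq_zero_of_eqOn isOpen_Ioo (Ioo_subset_Ioo_left hξ.1.le) hx hconst)

lemma differentiableAt_and_deriv_ne_zero {p' : ℝ} (h : IsClassicalTW P g U c φ G)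
    (hU : U ∈ 𝓝 ξ) (hmono : MonotoneOn φ U ∨ AntitoneOn φ U) (hφ : ContinuousAt φ ξ)
    (hP : HasStrictDerivAt P p' (φ ξ)) (hp' : p' ≠ 0) (hg : g (φ ξ) ≠ 0) :
    DifferentiableAt ℝ φ ξ ∧ deriv φ ξ ≠ 0 := by
  have hFG : ∀ᶠ x in 𝓝 ξ, HasDerivAt (fun y => P (φ y)) (G x) x :=
    eventually_of_mem hU h.hasDerivAt_comp
  have hdiff := hP.differentiableAt_of_comp hp' hφ hFG.self_of_nhds.differentiableAt
  refine ⟨hdiff, fun h0 => hg (neg_eq_zero.1 ?_)⟩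
  have hGξ : G ξ = 0 := by
    have hchain : HasDerivAt (fun y => P (φ y)) _ ξ := hP.hasDerivAt.comp ξ hdiff.hasDerivAt
    rw [h0, mul_zero] at hchain
    exact hFG.self_of_nhds.unique hchain
  have hG' : HasDerivAt G (-g (φ ξ)) ξ := by
    have hsub := (h.hasDerivAt_flux ξ (mem_of_mem_nhds hU)).sub (hdiff.hasDerivAt.const_mul c)
    rw [h0, mul_zero, sub_zero] at hsub
    exact hsub.congr_of_eventuallyEq (.of_forall fun y => by simp)
  obtain ⟨s, hs, hPs⟩ := hP.exists_monotoneOn_or_antitoneOn hp'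
  exact eq_zero_of_hasDerivAt_of_monotoneOn (inter_mem hU (hφ.preimage_mem_nhds hs))
    (monotoneOn_or_antitoneOn_comp hPs (hmono.imp (·.mono inter_subset_left)
      (·.mono inter_subset_left)) fun _ hx => hx.2) hFG hGξ hG'

end IsClassicalTW

end TravelingWave

/-- **Lemma 3.2**: under (R), a monotone traveling-wave profile has nonzero
derivative at every point of `I_±` where `g(φ(ξ)) ≠ 0`. -/
theorem deriv_ne_zero_of_monotone_profile
    (P g : ℝ → ℝ) (hR : CondR P g)
    (I : Set ℝ) (c : ℝ) (φ : ℝ → ℝ) (hTW : IsTW P g I c φ)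
    (hmono : MonotoneOn φ I ∨ AntitoneOn φ I)
    (ξ : ℝ) (hξ : ξ ∈ I \ jumpSet φ I) (hD : deriv P (φ ξ) ≠ 0)
    (hg : g (φ ξ) ≠ 0) :
    DifferentiableAt ℝ φ ξ ∧ deriv φ ξ ≠ 0 := by
  have hopen : IsOpen (I \ jumpSet φ I) := hTW.isOpen.sdiff hTW.jumps_finite.isClosed
  obtain ⟨ε, hε, hball⟩ := Metric.isOpen_iff.1 hopen ξ hξ
  rw [Real.ball_eq_Ioo] at hball
  have hξU : ξ ∈ Ioo (ξ - ε) (ξ + ε) := ⟨by linarith, by linarith⟩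
  have hUI : Ioo (ξ - ε) (ξ + ε) ⊆ I := hball.trans sdiff_subset
  have hmonoU := hmono.imp (·.mono hUI) (·.mono hUI)
  obtain ⟨G, hG⟩ := hTW.exists_isClassicalTW hR.1.continuousOn hR.2.1 (by linarith) hball
  have hφ01 := hG.mem_Ioo_of_monotoneOn hmonoU (fun x hx => hTW.mapsTo x (hUI hx)) hξU hg
  have hP : HasStrictDerivAt P (deriv P (φ ξ)) (φ ξ) :=
    (hR.1.contDiffAt (Icc_mem_nhds hφ01.1 hφ01.2)).hasStrictDerivAt (by norm_num)
  exact hG.differentiableAt_and_deriv_ne_zero (isOpen_Ioo.mem_nhds hξU) hmonoU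
    (hTW.cont.continuousAt (hopen.mem_nhds hξ)) hP hD hg
end
end

section
/- Assume (R), (P), (g) and suppose u_t = P(u)_{xx} + g(u) admits a shock wavefront with speed c satisfying (WF). Let ξ_s be a jump point of its profile φ, with one-sided limits φ_ℓ = φ(ξ_s⁺) < φ_r = φ(ξ_s⁻). Then: (i) φ_ℓ ∈ [0, β), and if φ_ℓ ∈ (α, β) then c ≥ 0; (ii) φ_r ∈ (α, 1], and if φ_r ∈ (α, β) then c ≤ 0. -/
open Set Filter MeasureTheory

noncomputable section

/-!
Written in distributions, the profile equation says that `P(φ) + ∫₀ˣ (cφ + ∫₀ᵗ g(φ))` has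
vanishing second derivative, so it is a.e. affine. Hence, away from the finitely many jumps,
`P(φ)` coincides with a continuous `W` satisfying `W' = K - cφ` with `K` continuous, one-sidedly
at the jumps. At a jump `ξ` this gives the Rankine–Hugoniot condition
`P(φ(ξ⁺)) = W(ξ) = P(φ(ξ⁻))`, and since `P` increases on `[0, α]`, decreases on `[α, β]` and
increases on `[β, 1]`, it locates the two states. If one of them lies in `(α, β)`, the
monotonicity of `φ` and of `P` on either side makes `ξ` a local minimum (or maximum) of `W`, so
the one-sided derivatives `K(ξ) - cφ(ξ±)` have opposite signs, and `φ(ξ⁺) < φ(ξ⁻)` fixes the sign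
of `c`.
-/

open Topology
open scoped ContDiff

def primitive (f : ℝ → ℝ) (x : ℝ) : ℝ := ∫ t in (0:ℝ)..x, f t

lemma MeasureTheory.LocallyIntegrable.intervalIntegrable {f : ℝ → ℝ}
    (hf : LocallyIntegrable f volume) (a b : ℝ) : IntervalIntegrable f volume a b :=
  intervalIntegrable_iff.2 <| (hf.integrableOn_isCompact isCompact_uIcc).mono_set uIoc_subset_uIcc

lemma MeasureTheory.LocallyIntegrable.continuous_primitive {f : ℝ → ℝ}
    (hf : LocallyIntegrable f volume) : Continuous (primitive f) :=
  intervalIntegral.continuous_primitive hf.intervalIntegrable 0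

lemma nhdsLE_inf_ae_le_nhdsLT (ξ : ℝ) : 𝓝[≤] ξ ⊓ ae volume ≤ 𝓝[<] ξ :=
  calc 𝓝[≤] ξ ⊓ ae volume ≤ 𝓝[≤] ξ ⊓ 𝓟 {ξ}ᶜ :=
        inf_le_inf_left _ (le_principal_iff.2 (compl_mem_ae_iff.2 (measure_singleton ξ)))
    _ = 𝓝[<] ξ := by rw [← nhdsWithin_inter', ← sdiff_eq, Iic_sdiff_right]

lemma MeasureTheory.LocallyIntegrable.hasDerivWithinAt_primitive_Ioi {f : ℝ → ℝ}
    (hf : LocallyIntegrable f volume) {ξ L : ℝ} (hL : Tendsto f (𝓝[>] ξ) (𝓝 L)) :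
    HasDerivWithinAt (primitive f) L (Ioi ξ) ξ :=
  hasDerivWithinAt_Ioi_iff_Ici.2 <| intervalIntegral.integral_hasDerivWithinAt_of_tendsto_ae_right
    (hf.intervalIntegrable 0 ξ) hf.aestronglyMeasurable.stronglyMeasurableAtFilter
    (hL.mono_left inf_le_left)

lemma MeasureTheory.LocallyIntegrable.hasDerivWithinAt_primitive_Iio {f : ℝ → ℝ}
    (hf : LocallyIntegrable f volume) {ξ L : ℝ} (hL : Tendsto f (𝓝[<] ξ) (𝓝 L)) :
    HasDerivWithinAt (primitive f) L (Iio ξ) ξ :=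
  hasDerivWithinAt_Iio_iff_Iic.2 <| intervalIntegral.integral_hasDerivWithinAt_of_tendsto_ae_right
    (hf.intervalIntegrable 0 ξ) hf.aestronglyMeasurable.stronglyMeasurableAtFilter
    (hL.mono_left (nhdsLE_inf_ae_le_nhdsLT ξ))

lemma HasCompactSupport.exists_subset_Icc {ψ : ℝ → ℝ} (hψ : HasCompactSupport ψ) :
    ∃ R, tsupport ψ ⊆ Icc (-R) R := by
  obtain ⟨R, hR⟩ := hψ.isCompact.isBounded.subset_closedBall 0
  exact ⟨R, fun x hx => by simpa [abs_le] using hR hx⟩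

lemma integral_primitive_mul_deriv {f ψ : ℝ → ℝ} (hf : LocallyIntegrable f volume)
    (hψ : ContDiff ℝ 1 ψ) (hψc : HasCompactSupport ψ) :
    ∫ x, primitive f x * deriv ψ x = -∫ x, f x * ψ x := by
  obtain ⟨R, hR⟩ := hψc.exists_subset_Icc
  set a := -|R| - 1
  set b := |R| + 1
  have hR' : tsupport ψ ⊆ Ioo a b := hR.trans (Icc_subset_Ioo (by grind) (by grind))
  have hsupp : Function.support (fun x => f x * ψ x) ⊆ Ioc a b :=
    (Function.support_mul_subset_right _ _).trans
      ((subset_tsupport _).trans (hR'.trans Ioo_subset_Ioc_self))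
  have hsupp' : Function.support (fun x => primitive f x * deriv ψ x) ⊆ Ioc a b :=
    (Function.support_mul_subset_right _ _).trans
      (support_deriv_subset.trans (hR'.trans Ioo_subset_Ioc_self))
  have hAC : AbsolutelyContinuousOnInterval (primitive f) a b :=
    (hf.intervalIntegrable a b).absolutelyContinuousOnInterval_intervalIntegral
      (by grind [mem_uIcc])
  have hψa : ψ a = 0 := image_eq_zero_of_notMem_tsupport fun h => (hR' h).1.false
  have hψb : ψ b = 0 := image_eq_zero_of_notMem_tsupport fun h => (hR' h).2.false
  have hderiv : ∀ᵐ x, x ∈ uIoc a b → deriv (primitive f) x * ψ x = f x * ψ x := by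
    filter_upwards [_root_.LocallyIntegrable.ae_hasDerivAt_integral hf] with x hx _
    rw [show deriv (primitive f) x = f x from (hx 0).deriv]
  rw [← intervalIntegral.integral_eq_integral_of_support_subset hsupp',
    ← intervalIntegral.integral_eq_integral_of_support_subset hsupp,
    hAC.integral_mul_deriv_eq_deriv_mul (hψ.contDiffOn.absolutelyContinuousOnInterval),
    hψa, hψb, intervalIntegral.integral_congr_ae hderiv]
  ring

lemma exists_deriv_eq_of_integral_eq_zero {χ : ℝ → ℝ} (hχ : ContDiff ℝ ∞ χ)
    (hχc : HasCompactSupport χ) (h0 : ∫ x, χ x = 0) :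
    ∃ ψ, ContDiff ℝ ∞ ψ ∧ HasCompactSupport ψ ∧ deriv ψ = χ := by
  obtain ⟨R, hR⟩ := hχc.exists_subset_Icc
  set a := -|R| - 1
  have hderiv : ∀ x, HasDerivAt (fun x => ∫ t in a..x, χ t) (χ x) x :=
    fun x => (hχ.continuous.integral_hasStrictDerivAt a x).hasDerivAt
  have hd : deriv (fun x => ∫ t in a..x, χ t) = χ := funext fun x => (hderiv x).deriv
  refine ⟨fun x => ∫ t in a..x, χ t,
    contDiff_infty_iff_deriv.2 ⟨fun x => (hderiv x).differentiableAt, by rwa [hd]⟩, ?_, hd⟩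
  refine HasCompactSupport.intro (isCompact_Icc (a := a) (b := |R| + 1)) fun x hx => ?_
  rcases not_and_or.1 hx with hx | hx
  · refine (intervalIntegral.integral_congr (g := fun _ => 0) fun t ht => ?_).trans
      intervalIntegral.integral_zero
    refine image_eq_zero_of_notMem_tsupport fun h => ?_
    grind [hR h, mem_uIcc]
  · refine (intervalIntegral.integral_eq_integral_of_support_subset ?_).trans h0
    refine (subset_tsupport χ).trans (hR.trans fun t ht => ?_)
    grind

lemma exists_deriv_deriv_eq {χ : ℝ → ℝ} (hχ : ContDiff ℝ ∞ χ) (hχc : HasCompactSupport χ)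
    (h0 : ∫ x, χ x = 0) (h1 : ∫ x, x * χ x = 0) :
    ∃ ψ, ContDiff ℝ ∞ ψ ∧ HasCompactSupport ψ ∧ deriv (deriv ψ) = χ := by
  obtain ⟨ψ₁, hψ₁, hψ₁c, rfl⟩ := exists_deriv_eq_of_integral_eq_zero hχ hχc h0
  have hψ₁0 : ∫ x, ψ₁ x = 0 := by
    have := integral_primitive_mul_deriv (locallyIntegrable_const 1) (hψ₁.of_le (by simp)) hψ₁c
    simp_all [primitive]
  obtain ⟨ψ, hψ, hψc, rfl⟩ := exists_deriv_eq_of_integral_eq_zero hψ₁ hψ₁c hψ₁0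
  exact ⟨ψ, hψ, hψc, rfl⟩

lemma exists_test_functions_with_moments : ∃ ρ σ : ℝ → ℝ,
    ContDiff ℝ ∞ ρ ∧ HasCompactSupport ρ ∧ ContDiff ℝ ∞ σ ∧ HasCompactSupport σ ∧
    ∫ x, ρ x = 1 ∧ ∫ x, σ x = 0 ∧ ∫ x, x * σ x = 1 := by
  let B : ContDiffBump (0:ℝ) := ⟨1, 2, one_pos, one_lt_two⟩
  have hρ : ContDiff ℝ ∞ (B.normed volume) := B.contDiff_normed
  have hρc : HasCompactSupport (B.normed volume) := B.hasCompactSupport_normed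
  have hρ' : ContDiff ℝ ∞ (deriv (B.normed volume)) := (contDiff_infty_iff_deriv.1 hρ).2
  refine ⟨B.normed volume, fun x => -deriv (B.normed volume) x, hρ, hρc, hρ'.neg,
    hρc.deriv.neg, B.integral_normed, ?_, ?_⟩
  · rw [MeasureTheory.integral_neg, integral_eq_zero_of_hasDerivAt_of_integrable
      (fun x => (hρ.differentiable (by simp) x).hasDerivAt)
      (hρ'.continuous.integrable_of_hasCompactSupport hρc.deriv)
      (hρ.continuous.integrable_of_hasCompactSupport hρc), neg_zero]
  · have := integral_primitive_mul_deriv (locallyIntegrable_const 1) (hρ.of_le (by simp)) hρc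
    simp_all [primitive, MeasureTheory.integral_neg, B.integral_normed]

lemma integral_sub_mul_sub_mul {f g h : ℝ → ℝ} (hf : Integrable f volume)
    (hg : Integrable g volume) (hh : Integrable h volume) (s t : ℝ) :
    ∫ x, (f x - s * g x - t * h x) = (∫ x, f x) - s * (∫ x, g x) - t * ∫ x, h x := by
  rw [integral_sub (f := fun x => f x - s * g x) (hf.sub (hg.const_mul s)) (hh.const_mul t),
    integral_sub hf (hg.const_mul s),
    integral_const_mul, integral_const_mul]

theorem ae_eq_affine_of_integral_mul_deriv_deriv_eq_zero {F : ℝ → ℝ}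
    (hF : LocallyIntegrable F volume)
    (h : ∀ ψ, ContDiff ℝ ∞ ψ → HasCompactSupport ψ → ∫ x, F x * deriv (deriv ψ) x = 0) :
    ∃ a b : ℝ, ∀ᵐ x, F x = a + b * x := by
  obtain ⟨ρ, σ, hρ, hρc, hσ, hσc, hρ0, hσ0, hσ1⟩ := exists_test_functions_with_moments
  have hid : LocallyIntegrable (fun x : ℝ => x) volume := continuous_id.locallyIntegrable
  have hI : ∀ {G θ : ℝ → ℝ}, LocallyIntegrable G volume → ContDiff ℝ ∞ θ → HasCompactSupport θ →
      Integrable (fun x => G x * θ x) volume :=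
    fun hG hθ hθc => hG.integrable_smul_right_of_hasCompactSupport hθ.continuous hθc
  have hI1 : ∀ {θ : ℝ → ℝ}, ContDiff ℝ ∞ θ → HasCompactSupport θ → Integrable θ volume :=
    fun hθ hθc => hθ.continuous.integrable_of_hasCompactSupport hθc
  set μ := ∫ x, x * ρ x
  set b := ∫ x, F x * σ x
  set a := (∫ x, F x * ρ x) - b * μ
  refine ⟨a, b, ?_⟩
  have key : ∀ χ : ℝ → ℝ, ContDiff ℝ ∞ χ → HasCompactSupport χ →
      ∫ x, χ x • (F x - (a + b * x)) = 0 := by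
    intro χ hχ hχc
    set m₀ := ∫ x, χ x
    set m₁ := ∫ x, x * χ x
    set k := m₁ - m₀ * μ
    -- `ρ` and `σ` absorb the two moments of `χ`; what is left is the second derivative of a test
    -- function, on which `F` integrates to zero.
    set χ₀ := fun x => χ x - m₀ * ρ x - k * σ x
    have hχ₀ : ContDiff ℝ ∞ χ₀ := (hχ.sub (contDiff_const.mul hρ)).sub (contDiff_const.mul hσ)
    have hχ₀c : HasCompactSupport χ₀ := (hχc.sub hρc.mul_left).sub hσc.mul_left
    obtain ⟨ψ, hψ, hψc, hψχ₀⟩ := exists_deriv_deriv_eq hχ₀ hχ₀c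
      (by rw [integral_sub_mul_sub_mul (hI1 hχ hχc) (hI1 hρ hρc) (hI1 hσ hσc), hρ0, hσ0]; ring)
      (by
        simp only [χ₀, mul_sub, mul_left_comm _ m₀, mul_left_comm _ k]
        rw [integral_sub_mul_sub_mul (hI hid hχ hχc) (hI hid hρ hρc) (hI hid hσ hσc), hσ1]
        ring)
    have hFχ : ∫ x, F x * χ x = m₀ * a + m₁ * b := by
      have := h ψ hψ hψc
      simp only [hψχ₀, χ₀, mul_sub, mul_left_comm _ m₀, mul_left_comm _ k] at this
      rw [integral_sub_mul_sub_mul (hI hF hχ hχc) (hI hF hρ hρc) (hI hF hσ hσc)] at this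
      linear_combination this
    calc ∫ x, χ x • (F x - (a + b * x))
        = ∫ x, (F x * χ x - a * χ x - b * (x * χ x)) := by
          congr 1; ext x; simp only [smul_eq_mul]; ring
      _ = 0 := by
          rw [integral_sub_mul_sub_mul (hI hF hχ hχc) (hI1 hχ hχc) (hI hid hχ hχc), hFχ]
          ring
  filter_upwards [ae_eq_zero_of_integral_contDiff_smul_eq_zero
    (hF.sub (continuous_const.add (continuous_const.mul continuous_id)).locallyIntegrable) key]
    with x hx
  exact sub_eq_zero.1 hx

lemma ContinuousOn.exists_continuous_eqOn_Icc {f : ℝ → ℝ} {a b : ℝ} (hab : a ≤ b)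
    (hf : ContinuousOn f (Icc a b)) : ∃ f₀ : ℝ → ℝ, Continuous f₀ ∧ EqOn f₀ f (Icc a b) :=
  ⟨fun x => f (projIcc a b hab x),
    hf.comp_continuous (continuous_subtype_val.comp continuous_projIcc)
      fun x => (projIcc a b hab x).2,
    fun x hx => by simp [projIcc_of_mem hab hx]⟩

lemma Continuous.locallyIntegrable_comp_of_mapsTo {h φ : ℝ → ℝ} {a b : ℝ} (hh : Continuous h)
    (hφ : Measurable φ) (hab : ∀ x, φ x ∈ Icc a b) :
    LocallyIntegrable (fun x => h (φ x)) volume := by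
  obtain ⟨C, hC⟩ := isCompact_Icc.exists_bound_of_continuousOn hh.continuousOn
  exact (locallyIntegrable_const C).mono (hh.measurable.comp hφ).aestronglyMeasurable
    (ae_of_all _ fun x => (hC _ (hab x)).trans (le_abs_self C))

lemma IsTW.congr_Icc {P g P' g' : ℝ → ℝ} {I : Set ℝ} {c : ℝ} {φ : ℝ → ℝ}
    (htw : IsTW P g I c φ) (hP : EqOn P' P (Icc 0 1)) (hg : EqOn g' g (Icc 0 1)) :
    IsTW P' g' I c φ where
  __ := htw
  weak_eq ψ hψ := by
    have hI := htw.isOpen.measurableSet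
    rw [setIntegral_congr_fun hI fun ξ hξ => show P' (φ ξ) * _ = P (φ ξ) * _ by
        rw [hP (htw.mapsTo ξ hξ)],
      setIntegral_congr_fun hI fun ξ hξ => show g' (φ ξ) * _ = g (φ ξ) * _ by
        rw [hg (htw.mapsTo ξ hξ)]]
    exact htw.weak_eq ψ hψ

lemma IsTW.integral_add_primitive_mul_deriv_deriv {P g : ℝ → ℝ} {c : ℝ} {φ : ℝ → ℝ}
    (htw : IsTW P g univ c φ) (hP : Continuous P) (hg : Continuous g) (hφ : Measurable φ)
    {ψ : ℝ → ℝ} (hψ : ContDiff ℝ ∞ ψ) (hψc : HasCompactSupport ψ) :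
    ∫ x, (P (φ x) + primitive (fun t => c * φ t + primitive (fun s => g (φ s)) t) x) *
      deriv (deriv ψ) x = 0 := by
  have hφ01 : ∀ x, φ x ∈ Icc (0:ℝ) 1 := fun x => htw.mapsTo x trivial
  set G := primitive fun s => g (φ s)
  set U := fun t => c * φ t + G t
  have hgφ := hg.locallyIntegrable_comp_of_mapsTo hφ hφ01
  have hφloc : LocallyIntegrable φ volume :=
    continuous_id.locallyIntegrable_comp_of_mapsTo hφ hφ01
  have hG : Continuous G := hgφ.continuous_primitive
  have hU : LocallyIntegrable U volume := (hφloc.smul c).add hG.locallyIntegrable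
  have hψ' : ContDiff ℝ ∞ (deriv ψ) := (contDiff_infty_iff_deriv.1 hψ).2
  have hψ'' : ContDiff ℝ ∞ (deriv (deriv ψ)) := (contDiff_infty_iff_deriv.1 hψ').2
  have hint : ∀ {F : ℝ → ℝ}, LocallyIntegrable F volume → ∀ {θ : ℝ → ℝ}, ContDiff ℝ ∞ θ →
      HasCompactSupport θ → Integrable (fun x => F x * θ x) volume :=
    fun hF _ hθ hθc => hF.integrable_smul_right_of_hasCompactSupport hθ.continuous hθc
  have hweak := htw.weak_eq ψ ⟨hψ, hψc, subset_univ _⟩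
  simp only [Measure.restrict_univ, iteratedDeriv_succ, iteratedDeriv_zero] at hweak
  have hV := integral_primitive_mul_deriv hU (hψ'.of_le (by simp)) hψc.deriv
  have hGψ := integral_primitive_mul_deriv hgφ (hψ.of_le (by simp)) hψc
  have hUψ : ∫ x, U x * deriv ψ x = c * (∫ x, φ x * deriv ψ x) + ∫ x, G x * deriv ψ x := by
    simp only [U, add_mul, mul_assoc]
    rw [integral_add ((hint hφloc hψ' hψc.deriv).const_mul c)
      (hint hG.locallyIntegrable hψ' hψc.deriv), integral_const_mul]
  simp only [add_mul]
  rw [integral_add (hint (hP.locallyIntegrable_comp_of_mapsTo hφ hφ01) hψ'' hψc.deriv.deriv)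
    (hint hU.continuous_primitive.locallyIntegrable hψ'' hψc.deriv.deriv), hweak, hV, hUψ, hGψ]
  ring

lemma IsTW.eventually_nhdsNE_eq_of_ae_eq {P g : ℝ → ℝ} {c : ℝ} {φ W : ℝ → ℝ}
    (htw : IsTW P g univ c φ) (hP : Continuous P) (hW : Continuous W)
    (hae : ∀ᵐ x, W x = P (φ x)) (ξ : ℝ) : ∀ᶠ x in 𝓝[≠] ξ, W x = P (φ x) := by
  have hWP : EqOn W (fun x => P (φ x)) (jumpSet φ univ)ᶜ :=
    Measure.eqOn_open_of_ae_eq (μ := volume) (ae_restrict_of_ae hae)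
      htw.jumps_finite.isClosed.isOpen_compl hW.continuousOn
      (hP.comp_continuousOn (by simpa [compl_eq_univ_sdiff] using htw.cont))
  exact (htw.jumps_finite.eventually_cofinite_notMem.filter_mono (nhdsNE_le_cofinite ξ)).mono
    fun _ hx => hWP hx

/-- The first integral `P(φ)' = K - cφ` of the profile equation, where `K' = -g(φ)`: `W`
agrees with `P(φ)` on punctured neighbourhoods, and at every point its one-sided derivatives are
`K - cφ(ξ±)`. -/
structure IsFirstIntegral (P : ℝ → ℝ) (c : ℝ) (φ W K : ℝ → ℝ) : Prop where
  eventually_eq : ∀ ξ, ∀ᶠ x in 𝓝[≠] ξ, W x = P (φ x)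
  right : ∀ ξ L, Tendsto φ (𝓝[>] ξ) (𝓝 L) →
    W ξ = P L ∧ HasDerivWithinAt W (K ξ - c * L) (Ioi ξ) ξ
  left : ∀ ξ L, Tendsto φ (𝓝[<] ξ) (𝓝 L) →
    W ξ = P L ∧ HasDerivWithinAt W (K ξ - c * L) (Iio ξ) ξ

theorem IsTW.exists_isFirstIntegral {P g : ℝ → ℝ} {c : ℝ} {φ : ℝ → ℝ}
    (htw : IsTW P g univ c φ) (hP : ContinuousOn P (Icc 0 1)) (hg : ContinuousOn g (Icc 0 1))
    (hφ : Measurable φ) : ∃ W K, IsFirstIntegral P c φ W K := by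
  obtain ⟨P₀, hP₀, hPP₀⟩ := hP.exists_continuous_eqOn_Icc zero_le_one
  obtain ⟨g₀, hg₀, hgg₀⟩ := hg.exists_continuous_eqOn_Icc zero_le_one
  have htw₀ := htw.congr_Icc hPP₀ hgg₀
  have hφ01 : ∀ x, φ x ∈ Icc (0:ℝ) 1 := fun x => htw.mapsTo x trivial
  set G := primitive fun s => g₀ (φ s)
  set U := fun t => c * φ t + G t
  have hG : Continuous G := (hg₀.locallyIntegrable_comp_of_mapsTo hφ hφ01).continuous_primitive
  have hU : LocallyIntegrable U volume :=
    ((continuous_id.locallyIntegrable_comp_of_mapsTo hφ hφ01).smul c).add hG.locallyIntegrable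
  obtain ⟨a, b, hab⟩ := ae_eq_affine_of_integral_mul_deriv_deriv_eq_zero
    ((hP₀.locallyIntegrable_comp_of_mapsTo hφ hφ01).add hU.continuous_primitive.locallyIntegrable)
    fun ψ hψ hψc => htw₀.integral_add_primitive_mul_deriv_deriv hP₀ hg₀ hφ hψ hψc
  set W := fun x => a + b * x - primitive U x
  have hW : Continuous W :=
    (continuous_const.add (continuous_const.mul continuous_id)).sub hU.continuous_primitive
  have hWP₀ : ∀ ξ, ∀ᶠ x in 𝓝[≠] ξ, W x = P₀ (φ x) := htw₀.eventually_nhdsNE_eq_of_ae_eq hP₀ hW <| by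
    filter_upwards [hab] with x hx
    simp only [W, Pi.add_apply] at hx ⊢
    linarith
  have hval : ∀ {s : Set ℝ} {ξ L : ℝ}, s ⊆ {ξ}ᶜ → (𝓝[s] ξ).NeBot →
      Tendsto φ (𝓝[s] ξ) (𝓝 L) → W ξ = P L := by
    intro s ξ L hs _ hL
    rw [← hPP₀ (isClosed_Icc.mem_of_tendsto hL (Eventually.of_forall hφ01))]
    refine tendsto_nhds_unique ((hW.tendsto ξ).mono_left nhdsWithin_le_nhds)
      (((hP₀.tendsto L).comp hL).congr' ?_)
    exact ((hWP₀ ξ).filter_mono (nhdsWithin_mono ξ hs)).mono fun x hx => hx.symm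
  have hUlim : ∀ {l : Filter ℝ} {ξ L : ℝ}, l ≤ 𝓝 ξ → Tendsto φ l (𝓝 L) →
      Tendsto U l (𝓝 (c * L + G ξ)) :=
    fun hl hL => (hL.const_mul c).add ((hG.tendsto _).mono_left hl)
  have hWderiv : ∀ {s : Set ℝ} {ξ L : ℝ}, HasDerivWithinAt (primitive U) (c * L + G ξ) s ξ →
      HasDerivWithinAt W (b - G ξ - c * L) s ξ := fun hV =>
    ((((hasDerivAt_id _).const_mul b).const_add a).hasDerivWithinAt.sub hV).congr_deriv (by ring)
  refine ⟨W, fun ξ => b - G ξ, fun ξ => (hWP₀ ξ).mono fun x hx => hx.trans (hPP₀ (hφ01 x)),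
    fun ξ L hL => ⟨hval (s := Ioi ξ) (fun x hx => ne_of_gt hx) inferInstance hL,
      hWderiv (hU.hasDerivWithinAt_primitive_Ioi (hUlim nhdsWithin_le_nhds hL))⟩,
    fun ξ L hL => ⟨hval (s := Iio ξ) (fun x hx => ne_of_lt hx) inferInstance hL,
      hWderiv (hU.hasDerivWithinAt_primitive_Iio (hUlim nhdsWithin_le_nhds hL))⟩⟩

lemma IsLocalMinOn.hasDerivWithinAt_Ioi_nonneg {f : ℝ → ℝ} {a f' : ℝ}
    (h : IsLocalMinOn f (Ioi a) a) (hf : HasDerivWithinAt f f' (Ioi a) a) : 0 ≤ f' := by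
  refine ge_of_tendsto ((hasDerivWithinAt_iff_tendsto_slope' self_notMem_Ioi).1 hf) ?_
  filter_upwards [h, self_mem_nhdsWithin] with x hx (hax : a < x)
  rw [slope_def_field]
  exact div_nonneg (sub_nonneg.2 hx) (sub_nonneg.2 hax.le)

lemma IsLocalMinOn.hasDerivWithinAt_Iio_nonpos {f : ℝ → ℝ} {a f' : ℝ}
    (h : IsLocalMinOn f (Iio a) a) (hf : HasDerivWithinAt f f' (Iio a) a) : f' ≤ 0 := by
  refine le_of_tendsto ((hasDerivWithinAt_iff_tendsto_slope' self_notMem_Iio).1 hf) ?_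
  filter_upwards [h, self_mem_nhdsWithin] with x hx (hxa : x < a)
  rw [slope_def_field]
  exact div_nonpos_of_nonneg_of_nonpos (sub_nonneg.2 hx) (sub_nonpos.2 hxa.le)

namespace IsFirstIntegral

variable {P : ℝ → ℝ} {c : ℝ} {φ W K : ℝ → ℝ} {ξ l r : ℝ}

theorem nonneg_of_jump_of_le (hW : IsFirstIntegral P c φ W K)
    (hl : Tendsto φ (𝓝[>] ξ) (𝓝 l)) (hr : Tendsto φ (𝓝[<] ξ) (𝓝 r)) (hlr : l < r)
    (hright : ∀ᶠ x in 𝓝[>] ξ, P l ≤ P (φ x)) (hleft : ∀ᶠ x in 𝓝[<] ξ, P r ≤ P (φ x)) :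
    0 ≤ c := by
  obtain ⟨hWl, hdl⟩ := hW.right ξ l hl
  obtain ⟨hWr, hdr⟩ := hW.left ξ r hr
  have hmin_r : IsLocalMinOn W (Ioi ξ) ξ := by
    filter_upwards [hright,
      (hW.eventually_eq ξ).filter_mono (nhdsWithin_mono ξ fun x hx => ne_of_gt hx)] with x hx hWx
    rwa [hWl, hWx]
  have hmin_l : IsLocalMinOn W (Iio ξ) ξ := by
    filter_upwards [hleft,
      (hW.eventually_eq ξ).filter_mono (nhdsWithin_mono ξ fun x hx => ne_of_lt hx)] with x hx hWx
    rwa [hWr, hWx]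
  have h₁ := hmin_r.hasDerivWithinAt_Ioi_nonneg hdl
  have h₂ := hmin_l.hasDerivWithinAt_Iio_nonpos hdr
  nlinarith

theorem neg (hW : IsFirstIntegral P c φ W K) :
    IsFirstIntegral (fun u => -P u) (-c) φ (fun x => -W x) (fun x => -K x) where
  eventually_eq ξ := (hW.eventually_eq ξ).mono fun x hx => by rw [hx]
  right ξ L hL := by
    obtain ⟨hWL, hd⟩ := hW.right ξ L hL
    exact ⟨by rw [hWL], hd.neg.congr_deriv (by ring)⟩
  left ξ L hL := by
    obtain ⟨hWL, hd⟩ := hW.left ξ L hL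
    exact ⟨by rw [hWL], hd.neg.congr_deriv (by ring)⟩

theorem nonpos_of_jump_of_ge (hW : IsFirstIntegral P c φ W K)
    (hl : Tendsto φ (𝓝[>] ξ) (𝓝 l)) (hr : Tendsto φ (𝓝[<] ξ) (𝓝 r)) (hlr : l < r)
    (hright : ∀ᶠ x in 𝓝[>] ξ, P (φ x) ≤ P l) (hleft : ∀ᶠ x in 𝓝[<] ξ, P (φ x) ≤ P r) :
    c ≤ 0 :=
  neg_nonneg.1 <| hW.neg.nonneg_of_jump_of_le hl hr hlr
    (hright.mono fun _ => neg_le_neg) (hleft.mono fun _ => neg_le_neg)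

end IsFirstIntegral

theorem CondP.strictMonoOn_strictAntiOn {P : ℝ → ℝ} {α β : ℝ} (hP : CondP P α β)
    (hPc : ContinuousOn P (Icc 0 1)) (h0α : 0 ≤ α) (hαβ : α ≤ β) (hβ1 : β ≤ 1) :
    StrictMonoOn P (Icc 0 α) ∧ StrictAntiOn P (Icc α β) ∧ StrictMonoOn P (Icc β 1) := by
  refine ⟨strictMonoOn_of_deriv_pos (convex_Icc 0 α)
      (hPc.mono (Icc_subset_Icc le_rfl (hαβ.trans hβ1))) fun x hx => ?_,
    strictAntiOn_of_deriv_neg (convex_Icc α β)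
      (hPc.mono (Icc_subset_Icc h0α hβ1)) fun x hx => ?_,
    strictMonoOn_of_deriv_pos (convex_Icc β 1)
      (hPc.mono (Icc_subset_Icc (h0α.trans hαβ) le_rfl)) fun x hx => ?_⟩
  all_goals rw [interior_Icc] at hx
  exacts [hP.1 x (Or.inl hx), hP.2 x hx, hP.1 x (Or.inr hx)]

theorem mem_of_apply_eq_of_strictMonoOn_strictAntiOn {P : ℝ → ℝ} {α β u v : ℝ}
    (h₁ : StrictMonoOn P (Icc 0 α)) (h₂ : StrictAntiOn P (Icc α β))
    (h₃ : StrictMonoOn P (Icc β 1)) (hu : 0 ≤ u) (hv : v ≤ 1) (huv : u < v) (hP : P u = P v) :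
    u < β ∧ α < v ∧ (u ∈ Ioo α β → β ≤ v) ∧ (v ∈ Ioo α β → u ≤ α) := by
  refine ⟨lt_of_not_ge fun hβu => ?_, lt_of_not_ge fun hvα => ?_,
    fun ⟨hαu, huβ⟩ => le_of_not_gt fun hvβ => ?_, fun ⟨hαv, hvβ⟩ => le_of_not_gt fun hαu => ?_⟩
  · exact (h₃ ⟨hβu, huv.le.trans hv⟩ ⟨hβu.trans huv.le, hv⟩ huv).ne hP
  · exact (h₁ ⟨hu, huv.le.trans hvα⟩ ⟨hu.trans huv.le, hvα⟩ huv).ne hP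
  · exact (h₂ ⟨hαu.le, huβ.le⟩ ⟨hαu.le.trans huv.le, hvβ.le⟩ huv).ne' hP
  · exact (h₂ ⟨hαu.le, huv.le.trans hvβ.le⟩ ⟨hαv.le, hvβ.le⟩ huv).ne' hP

theorem CondWF.antitone {φ : ℝ → ℝ} (hWF : CondWF φ) (hφ : Monotone φ ∨ Antitone φ) :
    Antitone φ :=
  hφ.resolve_left fun hm => by
    linarith [hm.le_of_tendsto hWF.1 0, hm.ge_of_tendsto hWF.2 0]

lemma Antitone.le_of_tendsto_nhdsGT {φ : ℝ → ℝ} (hφ : Antitone φ) {ξ L : ℝ}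
    (hL : Tendsto φ (𝓝[>] ξ) (𝓝 L)) {x : ℝ} (hx : ξ < x) : φ x ≤ L :=
  _root_.ge_of_tendsto hL <| by filter_upwards [Ioo_mem_nhdsGT hx] with y hy using hφ hy.2.le

lemma Antitone.ge_of_tendsto_nhdsLT {φ : ℝ → ℝ} (hφ : Antitone φ) {ξ L : ℝ}
    (hL : Tendsto φ (𝓝[<] ξ) (𝓝 L)) {x : ℝ} (hx : x < ξ) : L ≤ φ x :=
  _root_.le_of_tendsto hL <| by filter_upwards [Ioo_mem_nhdsLT hx] with y hy using hφ hy.1.le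

theorem jump_states_location_and_speed_sign_general
    (P g : ℝ → ℝ) (α β γ : ℝ)
    (h0α : 0 < α) (hαγ : α < γ) (hγβ : γ < β) (hβ1 : β < 1)
    (hR : CondR P g) (hP : CondP P α β)
    (c : ℝ) (φ : ℝ → ℝ)
    (hwf : IsShockWavefront P g c φ) (hWF : CondWF φ)
    (ξs φl φr : ℝ)
    (hl : Tendsto φ (nhdsWithin ξs (Ioi ξs)) (nhds φl))
    (hr : Tendsto φ (nhdsWithin ξs (Iio ξs)) (nhds φr))
    (hlr : φl < φr) :
    (φl ∈ Ico 0 β ∧ (φl ∈ Ioo α β → 0 ≤ c)) ∧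
    (φr ∈ Ioc α 1 ∧ (φr ∈ Ioo α β → c ≤ 0)) := by
  obtain ⟨⟨htw, hmono, -, -⟩, -⟩ := hwf
  have hanti : Antitone φ := hWF.antitone hmono
  have hφ01 : ∀ x, φ x ∈ Icc (0:ℝ) 1 := fun x => htw.mapsTo x trivial
  have hl01 := isClosed_Icc.mem_of_tendsto hl (Eventually.of_forall hφ01)
  have hr01 := isClosed_Icc.mem_of_tendsto hr (Eventually.of_forall hφ01)
  obtain ⟨hP₁, hP₂, hP₃⟩ :=
    hP.strictMonoOn_strictAntiOn hR.1.continuousOn h0α.le (hαγ.trans hγβ).le hβ1.le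
  obtain ⟨W, K, hW⟩ := htw.exists_isFirstIntegral hR.1.continuousOn hR.2.1 hanti.measurable
  have hRH : P φl = P φr := (hW.right ξs φl hl).1.symm.trans (hW.left ξs φr hr).1
  obtain ⟨hlβ, hαr, hlβr, hrαl⟩ :=
    mem_of_apply_eq_of_strictMonoOn_strictAntiOn hP₁ hP₂ hP₃ hl01.1 hr01.2 hlr hRH
  have hright : ∀ᶠ x in 𝓝[>] ξs, φ x ≤ φl :=
    eventually_nhdsWithin_of_forall fun _ hx => hanti.le_of_tendsto_nhdsGT hl hx
  have hleft : ∀ᶠ x in 𝓝[<] ξs, φr ≤ φ x :=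
    eventually_nhdsWithin_of_forall fun _ hx => hanti.ge_of_tendsto_nhdsLT hr hx
  refine ⟨⟨⟨hl01.1, hlβ⟩, fun hαl => ?_⟩, ⟨⟨hαr, hr01.2⟩, fun hαr' => ?_⟩⟩
  · refine hW.nonneg_of_jump_of_le hl hr hlr ?_ ?_
    · filter_upwards [hright, hl.eventually (lt_mem_nhds hαl.1)] with x hx hαx
      exact hP₂.antitoneOn ⟨hαx.le, hx.trans hαl.2.le⟩ ⟨hαl.1.le, hαl.2.le⟩ hx
    · filter_upwards [hleft] with x hx
      exact hP₃.monotoneOn ⟨hlβr hαl, hr01.2⟩ ⟨(hlβr hαl).trans hx, (hφ01 x).2⟩ hx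
  · refine hW.nonpos_of_jump_of_ge hl hr hlr ?_ ?_
    · filter_upwards [hright] with x hx
      exact hP₁.monotoneOn ⟨(hφ01 x).1, hx.trans (hrαl hαr')⟩ ⟨hl01.1, hrαl hαr'⟩ hx
    · filter_upwards [hleft, hr.eventually (gt_mem_nhds hαr'.2)] with x hx hxβ
      exact hP₂.antitoneOn ⟨hαr'.1.le, hαr'.2.le⟩ ⟨hαr'.1.le.trans hx, hxβ.le⟩ hx

/-- **Lemma 5.3**: location of the jump states of a shock wavefront satisfying
(WF), and the induced sign of the speed. -/
theorem jump_states_location_and_speed_sign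
    (P g : ℝ → ℝ) (α β γ : ℝ)
    (h0α : 0 < α) (hαγ : α < γ) (hγβ : γ < β) (hβ1 : β < 1)
    (hR : CondR P g) (hP : CondP P α β) (hg : Condg g γ)
    (c : ℝ) (φ : ℝ → ℝ)
    (hwf : IsShockWavefront P g c φ) (hWF : CondWF φ)
    (ξs φl φr : ℝ) (hjump : ξs ∈ jumpSet φ univ)
    (hl : Tendsto φ (nhdsWithin ξs (Ioi ξs)) (nhds φl))
    (hr : Tendsto φ (nhdsWithin ξs (Iio ξs)) (nhds φr))
    (hlr : φl < φr) :
    (φl ∈ Ico 0 β ∧ (φl ∈ Ioo α β → 0 ≤ c)) ∧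
    (φr ∈ Ioc α 1 ∧ (φr ∈ Ioo α β → c ≤ 0)) :=
  jump_states_location_and_speed_sign_general P g α β γ h0α hαγ hγβ hβ1 hR hP c φ hwf hWF ξs φl φr
    hl hr hlr
end
end

section
/- Let P ∈ C²([0,1]) and 0 < α < β < 1 be such that P' > 0 on (0,α) ∪ (β,1) and P' < 0 on (α,β), and assume P(1) > P(0). Then the set of admissible pairs {(φ_ℓ, φ_r) ∈ [0,α] × [β,1] : P(φ_ℓ) = P(φ_r)} is exactly the graph of a function η : I → [β,1], where I ⊂ [0,α] is a closed nonempty interval, η is continuous on I, of class C¹ on the interior of I, and η' > 0 on the interior of I. -/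
open Set Filter MeasureTheory

noncomputable section

/-! On `[0, α]` and on `[β, 1]` the potential `P` is strictly increasing, so a left state `φl`
has a partner `φr ∈ [β, 1]` with `P φl = P φr` exactly when `P φl ∈ [P β, P 1]`, and the partner
is then unique: `η = (P|[β,1])⁻¹ ∘ P`. As `P` decreases on `[α, β]`, `P β < P α`; together with
`P 0 < P 1` this makes the ranges `P [0, α]` and `P [β, 1]` overlap, so the left states with a
partner form a nonempty closed interval `[a, b] ⊆ [0, α]`. Inside it `η' = P' / (P' ∘ η) > 0` by
the inverse function rule, and `η'` is continuous because `P` is `C¹` and `P'` does not vanish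
on `(β, 1)`. -/

open Function Topology

theorem IsCompact.continuousOn_invFunOn {X Y : Type*} [TopologicalSpace X] [Nonempty X]
    [TopologicalSpace Y] [T2Space Y] {s : Set X} {f : X → Y} (hs : IsCompact s)
    (hf : ContinuousOn f s) (hinj : InjOn f s) : ContinuousOn (invFunOn f s) (f '' s) := by
  refine continuousOn_iff_isClosed.2 fun C hC => ⟨f '' (C ∩ s),
    ((hs.inter_left hC).image_of_continuousOn (hf.mono inter_subset_right)).isClosed, ?_⟩
  ext y
  constructor
  · rintro ⟨hyC, x, hx, rfl⟩
    rw [mem_preimage, hinj.leftInvOn_invFunOn hx] at hyC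
    exact ⟨⟨x, ⟨hyC, hx⟩, rfl⟩, x, hx, rfl⟩
  · rintro ⟨⟨x, ⟨hxC, hx⟩, rfl⟩, -⟩
    refine ⟨?_, x, hx, rfl⟩
    rwa [mem_preimage, hinj.leftInvOn_invFunOn hx]

theorem contDiffOn_one_of_hasDerivAt {𝕜 F : Type*} [NontriviallyNormedField 𝕜]
    [NormedAddCommGroup F] [NormedSpace 𝕜 F] {f f' : 𝕜 → F} {s : Set 𝕜} (hs : IsOpen s)
    (hf : ∀ x ∈ s, HasDerivAt f (f' x) x) (hf' : ContinuousOn f' s) : ContDiffOn 𝕜 1 f s := by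
  rw [← zero_add (1 : WithTop ℕ∞), contDiffOn_succ_iff_deriv_of_isOpen hs, contDiffOn_zero]
  exact ⟨fun x hx => (hf x hx).differentiableAt.differentiableWithinAt, by simp,
    hf'.congr fun x hx => (hf x hx).deriv⟩

section Interval

variable {f : ℝ → ℝ} {a b : ℝ}

theorem strictMonoOn_Icc_of_deriv_pos (hfc : ContinuousOn f (Icc a b))
    (hf' : ∀ x ∈ Ioo a b, 0 < deriv f x) : StrictMonoOn f (Icc a b) :=
  strictMonoOn_of_deriv_pos (convex_Icc a b) hfc (by rwa [interior_Icc])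

theorem strictAntiOn_Icc_of_deriv_neg (hfc : ContinuousOn f (Icc a b))
    (hf' : ∀ x ∈ Ioo a b, deriv f x < 0) : StrictAntiOn f (Icc a b) :=
  strictAntiOn_of_deriv_neg (convex_Icc a b) hfc (by rwa [interior_Icc])

theorem ContinuousOn.surjOn_Icc_of_le (hfc : ContinuousOn f (Icc a b)) (hab : a ≤ b) :
    SurjOn f (Icc a b) (Icc (f a) (f b)) :=
  hfc.surjOn_Icc (left_mem_Icc.2 hab) (right_mem_Icc.2 hab)

theorem ContinuousOn.invFunOn_mem_Ioo (hfc : ContinuousOn f (Icc a b))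
    (hab : a ≤ b) {y : ℝ} (hy : y ∈ Ioo (f a) (f b)) : invFunOn f (Icc a b) y ∈ Ioo a b := by
  have hsurj := hfc.surjOn_Icc_of_le hab
  obtain ⟨hax, hxb⟩ := hsurj.mapsTo_invFunOn (Ioo_subset_Icc_self hy)
  have hfx := hsurj.rightInvOn_invFunOn (Ioo_subset_Icc_self hy)
  refine ⟨hax.lt_of_ne fun h => ?_, hxb.lt_of_ne fun h => ?_⟩
  · rw [h, hfx] at hy
    exact hy.1.false
  · rw [← h, hfx] at hy
    exact hy.2.false

namespace StrictMonoOn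

theorem exists_Icc_eq_inter_preimage_Icc (hf : StrictMonoOn f (Icc a b))
    (hfc : ContinuousOn f (Icc a b)) (hab : a ≤ b) {c d : ℝ} (hcb : c ≤ f b) (had : f a ≤ d)
    (hcd : c ≤ d) :
    ∃ a' b', a' ≤ b' ∧ Icc a b ∩ f ⁻¹' Icc c d = Icc a' b' ∧ MapsTo f (Ioo a' b') (Ioo c d) := by
  have hfab : f a ≤ f b := hf.monotoneOn (left_mem_Icc.2 hab) (right_mem_Icc.2 hab) hab
  obtain ⟨a', ha', hfa'⟩ : ∃ a' ∈ Icc a b, f a' = max (f a) c :=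
    intermediate_value_Icc hab hfc ⟨le_max_left _ _, max_le hfab hcb⟩
  obtain ⟨b', hb', hfb'⟩ : ∃ b' ∈ Icc a b, f b' = min (f b) d :=
    intermediate_value_Icc hab hfc ⟨le_min hfab had, min_le_left _ _⟩
  have hIcc : Icc a b ∩ f ⁻¹' Icc c d = Icc a' b' := by
    ext x
    simp only [mem_inter_iff, mem_preimage, mem_Icc]
    constructor
    · rintro ⟨hx, hcx, hxd⟩
      have hfax : f a ≤ f x := hf.monotoneOn (left_mem_Icc.2 hab) hx hx.1
      have hfxb : f x ≤ f b := hf.monotoneOn hx (right_mem_Icc.2 hab) hx.2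
      exact ⟨(hf.le_iff_le ha' hx).1 (hfa' ▸ max_le hfax hcx),
        (hf.le_iff_le hx hb').1 (hfb' ▸ le_min hfxb hxd)⟩
    · rintro ⟨ha'x, hxb'⟩
      have hx : x ∈ Icc a b := ⟨ha'.1.trans ha'x, hxb'.trans hb'.2⟩
      exact ⟨hx, (le_max_right _ _).trans (hfa' ▸ hf.monotoneOn ha' hx ha'x),
        (hf.monotoneOn hx hb' hxb').trans (hfb' ▸ min_le_right _ _)⟩
  refine ⟨a', b', (hf.le_iff_le ha' hb').1 ?_, hIcc, fun x hx => ?_⟩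
  · rw [hfa', hfb']
    exact max_le (le_min hfab had) (le_min hcb hcd)
  · have hx' : x ∈ Icc a b := ⟨ha'.1.trans hx.1.le, hx.2.le.trans hb'.2⟩
    exact ⟨(le_max_right _ _).trans_lt (hfa' ▸ hf ha' hx' hx.1),
      (hfb' ▸ hf hx' hb' hx.2).trans_le (min_le_right _ _)⟩

theorem mem_Icc_and_invFunOn_eq_iff (hf : StrictMonoOn f (Icc a b))
    (hfc : ContinuousOn f (Icc a b)) (hab : a ≤ b) {x y : ℝ} :
    y ∈ Icc (f a) (f b) ∧ invFunOn f (Icc a b) y = x ↔ x ∈ Icc a b ∧ f x = y := by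
  constructor
  · rintro ⟨hy, rfl⟩
    exact ⟨(hfc.surjOn_Icc_of_le hab).mapsTo_invFunOn hy,
      (hfc.surjOn_Icc_of_le hab).rightInvOn_invFunOn hy⟩
  · rintro ⟨hx, rfl⟩
    exact ⟨hf.monotoneOn.mapsTo_Icc hx, hf.injOn.leftInvOn_invFunOn hx⟩

theorem continuousOn_invFunOn_Icc (hf : StrictMonoOn f (Icc a b))
    (hfc : ContinuousOn f (Icc a b)) (hab : a ≤ b) :
    ContinuousOn (invFunOn f (Icc a b)) (Icc (f a) (f b)) :=
  (isCompact_Icc.continuousOn_invFunOn hfc hf.injOn).mono (hfc.surjOn_Icc_of_le hab)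

theorem hasDerivAt_invFunOn (hf : StrictMonoOn f (Icc a b)) (hfc : ContinuousOn f (Icc a b))
    (hab : a ≤ b) {y f' : ℝ} (hy : y ∈ Ioo (f a) (f b))
    (hf' : HasDerivAt f f' (invFunOn f (Icc a b) y)) (hf'0 : f' ≠ 0) :
    HasDerivAt (invFunOn f (Icc a b)) f'⁻¹ y := by
  have hnhds : Icc (f a) (f b) ∈ 𝓝 y := Icc_mem_nhds hy.1 hy.2
  refine hf'.of_local_left_inverse ((hf.continuousOn_invFunOn_Icc hfc hab).continuousAt hnhds)
    hf'0 ?_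
  filter_upwards [hnhds] with z hz using
    (hfc.surjOn_Icc_of_le hab).rightInvOn_invFunOn hz

theorem contDiffOn_invFunOn_comp (hf : StrictMonoOn f (Icc a b))
    (hfc : ContinuousOn f (Icc a b)) (hab : a ≤ b) (hf1 : ContDiffOn ℝ 1 f (Ioo a b))
    (hf'0 : ∀ x ∈ Ioo a b, deriv f x ≠ 0) {g : ℝ → ℝ} {s : Set ℝ} (hs : IsOpen s)
    (hg : ContDiffOn ℝ 1 g s) (hgs : MapsTo g s (Ioo (f a) (f b))) :
    ContDiffOn ℝ 1 (fun x => invFunOn f (Icc a b) (g x)) s ∧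
      ∀ x ∈ s, deriv (fun x => invFunOn f (Icc a b) (g x)) x =
        deriv g x / deriv f (invFunOn f (Icc a b) (g x)) := by
  set q := invFunOn f (Icc a b)
  have hq : ∀ x ∈ s, q (g x) ∈ Ioo a b ∧
      HasDerivAt (fun x => q (g x)) (deriv g x / deriv f (q (g x))) x := by
    intro x hx
    have hqx : q (g x) ∈ Ioo a b := hfc.invFunOn_mem_Ioo hab (hgs hx)
    have hf' : HasDerivAt f (deriv f (q (g x))) (q (g x)) :=
      ((hf1.contDiffAt (isOpen_Ioo.mem_nhds hqx)).differentiableAt one_ne_zero).hasDerivAt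
    have hg' : HasDerivAt g (deriv g x) x :=
      ((hg.contDiffAt (hs.mem_nhds hx)).differentiableAt one_ne_zero).hasDerivAt
    refine ⟨hqx, ?_⟩
    rw [div_eq_inv_mul]
    exact (hf.hasDerivAt_invFunOn hfc hab (hgs hx) hf' (hf'0 _ hqx)).comp x hg'
  have hqg : ContinuousOn (fun x => q (g x)) s := fun x hx =>
    (hq x hx).2.continuousAt.continuousWithinAt
  refine ⟨contDiffOn_one_of_hasDerivAt hs (fun x hx => (hq x hx).2) ?_,
    fun x hx => (hq x hx).2.deriv⟩
  exact (hg.continuousOn_deriv_of_isOpen hs le_rfl).div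
    ((hf1.continuousOn_deriv_of_isOpen isOpen_Ioo le_rfl).comp hqg fun x hx => (hq x hx).1)
    fun x hx => hf'0 _ (hq x hx).1

end StrictMonoOn

end Interval

/-- **Proposition 5.7**: if `P(1) > P(0)`, the set of admissible pairs
`{(φl, φr) ∈ [0,α] × [β,1] : P(φl) = P(φr)}` is the graph of a strictly
increasing function `η` defined on a closed nonempty interval `I ⊆ [0,α]`,
continuous on `I` and `C¹` with positive derivative on its interior. -/
theorem admissible_pairs_graph
    (P : ℝ → ℝ) (α β : ℝ)
    (h0α : 0 < α) (hαβ : α < β) (hβ1 : β < 1)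
    (hP2 : ContDiffOn ℝ 2 P (Icc 0 1))
    (hpos : ∀ u ∈ Ioo (0:ℝ) α ∪ Ioo β 1, 0 < deriv P u)
    (hneg : ∀ u ∈ Ioo α β, deriv P u < 0)
    (hP10 : P 0 < P 1) :
    ∃ (I : Set ℝ) (η : ℝ → ℝ),
      I.Nonempty ∧ IsClosed I ∧ I.OrdConnected ∧ I ⊆ Icc 0 α ∧
      (∀ u ∈ I, η u ∈ Icc β 1) ∧
      ContinuousOn η I ∧
      ContDiffOn ℝ 1 η (interior I) ∧
      (∀ u ∈ interior I, 0 < deriv η u) ∧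
      (∀ φl φr : ℝ,
        (φl ∈ Icc 0 α ∧ φr ∈ Icc β 1 ∧ P φl = P φr) ↔ (φl ∈ I ∧ φr = η φl)) := by
  have hPc : ContinuousOn P (Icc 0 1) := hP2.continuousOn
  have hleftc : ContinuousOn P (Icc 0 α) := hPc.mono (Icc_subset_Icc_right (by linarith))
  have hrightc : ContinuousOn P (Icc β 1) := hPc.mono (Icc_subset_Icc_left (by linarith))
  have hleft := strictMonoOn_Icc_of_deriv_pos hleftc fun u hu => hpos u (Or.inl hu)
  have hright := strictMonoOn_Icc_of_deriv_pos hrightc fun u hu => hpos u (Or.inr hu)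
  have hPβα : P β < P α :=
    strictAntiOn_Icc_of_deriv_neg (hPc.mono (Icc_subset_Icc h0α.le hβ1.le)) hneg
      (left_mem_Icc.2 hαβ.le) (right_mem_Icc.2 hαβ.le) hαβ
  obtain ⟨a, b, hab, hI, hPab⟩ := hleft.exists_Icc_eq_inter_preimage_Icc hleftc h0α.le
    hPβα.le hP10.le (hright.monotoneOn (left_mem_Icc.2 hβ1.le) (right_mem_Icc.2 hβ1.le) hβ1.le)
  have hab0α : Icc a b ⊆ Icc 0 α := hI ▸ inter_subset_left
  have hP1 : ContDiffOn ℝ 1 P (Icc 0 1) := hP2.of_le (by norm_num)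
  obtain ⟨hC1, hderiv⟩ := hright.contDiffOn_invFunOn_comp hrightc hβ1.le
    (hP1.mono (Ioo_subset_Icc_self.trans (Icc_subset_Icc_left (by linarith))))
    (fun v hv => (hpos v (Or.inr hv)).ne') isOpen_Ioo
    (hP1.mono (Ioo_subset_Icc_self.trans (hab0α.trans (Icc_subset_Icc_right (by linarith)))))
    hPab
  have hgraph (x y : ℝ) := hright.mem_Icc_and_invFunOn_eq_iff hrightc hβ1.le (x := x) (y := y)
  refine ⟨Icc a b, fun u => invFunOn P (Icc β 1) (P u), nonempty_Icc.2 hab, isClosed_Icc,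
    ordConnected_Icc, hab0α, fun u hu => ((hgraph _ _).1 ⟨(hI.ge hu).2, rfl⟩).1,
    (hright.continuousOn_invFunOn_Icc hrightc hβ1.le).comp (hleftc.mono hab0α)
      fun u hu => (hI.ge hu).2, by rwa [interior_Icc], fun u hu => ?_, fun φl φr => ?_⟩
  · rw [interior_Icc] at hu
    rw [hderiv u hu]
    exact div_pos (hpos u (Or.inl (Ioo_subset_Ioo (hab0α (left_mem_Icc.2 hab)).1
      (hab0α (right_mem_Icc.2 hab)).2 hu)))
      (hpos _ (Or.inr (hrightc.invFunOn_mem_Ioo hβ1.le (hPab hu))))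
  · rw [← hI, mem_inter_iff, mem_preimage, and_assoc, eq_comm (a := φr), hgraph,
      eq_comm (a := P φr)]
end
end

section
/- Consider D(u) = D_i(1 − 4u + 3u²) + D_g(4u − 3u²) with D_i, D_g > 0 and g(u) = λ_g u(1−u) + [λ_i − λ_g − (k_i − k_g)] u(1−u)² − k_g u. Then: (1) there exist 0 < α < β < 1 with D > 0 on (0,α) ∪ (β,1) and D < 0 on (α,β) if and only if D_i > 4D_g > 0, in which case α = 2/3 − ω/3 and β = 2/3 + ω/3 with ω := √((D_i − 4D_g)/(D_i − D_g)) ∈ (0,1); (2) the reaction term g satisfies g(0) = g(1) = 0, g < 0 on (0,γ), g > 0 on (γ,1) for some γ with α < γ < β if and only if k_g = 0, λ_g > 0 and (1−ω)/(2+ω) < λ_g/(k_i − λ_i) < (1+ω)/(2−ω). -/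
/-!
Completing the square gives `3 D(u) = (D_i − D_g)((3u − 2)² − ω²)`, so for `D_i > 4D_g > 0` the
diffusivity is negative exactly on `(2/3 − ω/3, 2/3 + ω/3)`; conversely
`4 D(u) = D_i (2 − 3u)² + (4D_g − D_i) u (4 − 3u)` is nonnegative on `[0, 1]` when `D_i ≤ 4D_g`.

Bistability forces `g(1) = −k_g = 0`, and then `g(u) = u(1 − u)((k_i − λ_i + λ_g) u − (k_i − λ_i))`.
Such a cubic changes sign from negative to positive at `γ ∈ (0, 1)` iff its linear factor has positive
slope and vanishes at `γ`, i.e. `γ = (k_i − λ_i)/(k_i − λ_i + λ_g)`; placing this root in `(α, β)` is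
the stated bound on `λ_g/(k_i − λ_i)`.
-/

open Set Filter Topology

namespace JBMS

def diffusivity (Di Dg u : ℝ) : ℝ := Di * (1 - 4*u + 3*u^2) + Dg * (4*u - 3*u^2)

def reaction (ki kg lami lamg u : ℝ) : ℝ :=
  lamg * u * (1-u) + (lami - lamg - (ki - kg)) * u * (1-u)^2 - kg * u

def IsBistable (f : ℝ → ℝ) (γ : ℝ) : Prop :=
  f 0 = 0 ∧ f 1 = 0 ∧ (∀ u ∈ Ioo 0 γ, f u < 0) ∧ ∀ u ∈ Ioo γ 1, 0 < f u

section Diffusivity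

variable {Di Dg : ℝ}

theorem four_mul_diffusivity (u : ℝ) :
    4 * diffusivity Di Dg u = Di * (2 - 3*u)^2 + (4*Dg - Di) * (u * (4 - 3*u)) := by
  unfold diffusivity; ring

theorem four_mul_lt_of_diffusivity_neg (hDi : 0 ≤ Di) {u : ℝ} (hu₀ : 0 ≤ u) (hu : u ≤ 4/3)
    (h : diffusivity Di Dg u < 0) : 4 * Dg < Di := by
  by_contra! hle
  have : 0 ≤ 4 * diffusivity Di Dg u := by
    rw [four_mul_diffusivity]
    have : 0 ≤ u * (4 - 3*u) := mul_nonneg hu₀ (by linarith)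
    positivity
  linarith

theorem sq_sqrt_ratio_mul (h4 : 4 * Dg ≤ Di) (hDD : Dg < Di) :
    √((Di - 4*Dg) / (Di - Dg)) ^ 2 * (Di - Dg) = Di - 4*Dg := by
  rw [Real.sq_sqrt (div_nonneg (by linarith) (by linarith))]
  field_simp [(sub_pos.2 hDD).ne']

theorem sqrt_ratio_mem_Ioo (hDg : 0 < Dg) (h4 : 4 * Dg < Di) :
    √((Di - 4*Dg) / (Di - Dg)) ∈ Ioo 0 1 := by
  have hDD : 0 < Di - Dg := by linarith
  refine ⟨Real.sqrt_pos.2 (div_pos (by linarith) hDD), ?_⟩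
  rw [Real.sqrt_lt' one_pos, one_pow, div_lt_one hDD]
  linarith

variable {ω : ℝ} (hω : ω ^ 2 * (Di - Dg) = Di - 4*Dg)
include hω

theorem three_mul_diffusivity (u : ℝ) :
    3 * diffusivity Di Dg u = (Di - Dg) * ((3*u - 2)^2 - ω^2) := by
  unfold diffusivity; linear_combination hω

theorem diffusivity_pos (hDD : Dg < Di) (hω₀ : 0 ≤ ω) {u : ℝ}
    (hu : u ∉ Icc (2/3 - ω/3) (2/3 + ω/3)) : 0 < diffusivity Di Dg u := by
  have hsq : ω ^ 2 < (3*u - 2)^2 := by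
    rw [sq_lt_sq, abs_of_nonneg hω₀, lt_abs]
    by_contra! h
    exact hu ⟨by linarith [neg_le.1 h.2], by linarith [h.1]⟩
  have : 0 < 3 * diffusivity Di Dg u := by
    rw [three_mul_diffusivity hω]
    exact mul_pos (by linarith) (by linarith)
  linarith

theorem diffusivity_neg (hDD : Dg < Di) {u : ℝ} (hu : u ∈ Ioo (2/3 - ω/3) (2/3 + ω/3)) :
    diffusivity Di Dg u < 0 := by
  have hsq : (3*u - 2)^2 < ω ^ 2 := sq_lt_sq' (by linarith [hu.1]) (by linarith [hu.2])
  have : 3 * diffusivity Di Dg u < 0 := by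
    rw [three_mul_diffusivity hω]
    exact mul_neg_of_pos_of_neg (by linarith) (by linarith)
  linarith

end Diffusivity

theorem diffusivity_sign_pattern {Di Dg ω : ℝ} (hDg : 0 < Dg) (h4 : 4 * Dg < Di)
    (hω : ω = √((Di - 4*Dg) / (Di - Dg))) :
    (∀ u ∈ Ioo 0 (2/3 - ω/3) ∪ Ioo (2/3 + ω/3) 1, 0 < diffusivity Di Dg u) ∧
      ∀ u ∈ Ioo (2/3 - ω/3) (2/3 + ω/3), diffusivity Di Dg u < 0 := by
  have hDD : Dg < Di := by linarith
  have hω₂ : ω ^ 2 * (Di - Dg) = Di - 4*Dg := hω ▸ sq_sqrt_ratio_mul h4.le hDD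
  have hω₀ : 0 ≤ ω := hω ▸ Real.sqrt_nonneg _
  refine ⟨fun u hu => diffusivity_pos hω₂ hDD hω₀ ?_, fun u hu => diffusivity_neg hω₂ hDD hu⟩
  rintro ⟨h₁, h₂⟩
  rcases hu with ⟨-, h⟩ | ⟨h, -⟩ <;> linarith

theorem eq_zero_of_neg_of_pos {f : ℝ → ℝ} {a γ b : ℝ} (hf : ContinuousAt f γ) (ha : a < γ)
    (hb : γ < b) (hneg : ∀ u ∈ Ioo a γ, f u < 0) (hpos : ∀ u ∈ Ioo γ b, 0 < f u) : f γ = 0 :=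
  le_antisymm
    (le_of_tendsto (hf.tendsto.mono_left nhdsWithin_le_nhds)
      (eventually_of_mem (Ioo_mem_nhdsLT ha) fun u hu => (hneg u hu).le))
    (ge_of_tendsto (hf.tendsto.mono_left nhdsWithin_le_nhds)
      (eventually_of_mem (Ioo_mem_nhdsGT hb) fun u hu => (hpos u hu).le))

theorem isBistable_cubic_iff {c k γ : ℝ} (hγ : γ ∈ Ioo 0 1) :
    IsBistable (fun u => u * (1 - u) * (c*u - k)) γ ↔ 0 < c ∧ c * γ = k := by
  obtain ⟨hγ₀, hγ₁⟩ := hγ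
  constructor
  · rintro ⟨-, -, hneg, hpos⟩
    have hroot : γ * (1 - γ) * (c*γ - k) = 0 :=
      eq_zero_of_neg_of_pos (f := fun u => u * (1 - u) * (c*u - k)) (by fun_prop) hγ₀ hγ₁ hneg hpos
    have hk : c * γ = k := by
      have := (mul_eq_zero.1 hroot).resolve_left (mul_pos hγ₀ (by linarith)).ne'
      linarith
    refine ⟨?_, hk⟩
    have hmid := hpos ((γ + 1)/2) ⟨by linarith, by linarith⟩
    rw [← hk] at hmid
    have hfac : 0 < (γ + 1)/2 * (1 - (γ + 1)/2) * ((1 - γ)/2) :=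
      mul_pos (mul_pos (by linarith) (by linarith)) (by linarith)
    exact (mul_pos_iff_of_pos_left hfac).1 (by linarith)
  · rintro ⟨hc, rfl⟩
    refine ⟨by ring, by ring, fun u ⟨hu₀, hu⟩ => ?_, fun u ⟨hu, hu₁⟩ => ?_⟩
    · exact mul_neg_of_pos_of_neg (mul_pos hu₀ (by linarith)) (by nlinarith)
    · exact mul_pos (mul_pos (by linarith) (by linarith)) (by nlinarith)

theorem exists_root_mem_Ioo_iff {a b K l : ℝ} (ha : 0 < a) (hb : 0 < b) (hb₁ : b ≤ 1) :
    (∃ γ, a < γ ∧ γ < b ∧ 0 < K + l ∧ (K + l) * γ = K) ↔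
      0 < l ∧ (1 - b)/b < l/K ∧ l/K < (1 - a)/a := by
  constructor
  · rintro ⟨γ, haγ, hγb, hc, hγ⟩
    have hK : 0 < K := by rw [← hγ]; exact mul_pos hc (by linarith)
    refine ⟨by nlinarith, ?_, ?_⟩
    · rw [div_lt_div_iff₀ hb hK]; nlinarith
    · rw [div_lt_div_iff₀ hK ha]; nlinarith
  · rintro ⟨hl, hlo, hhi⟩
    have hK : 0 < K := by
      have : 0 < l / K := lt_of_le_of_lt (div_nonneg (by linarith) hb.le) hlo
      exact (div_pos_iff_of_pos_left hl).1 this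
    rw [div_lt_div_iff₀ hb hK] at hlo
    rw [div_lt_div_iff₀ hK ha] at hhi
    have hc : 0 < K + l := by linarith
    refine ⟨K / (K + l), ?_, ?_, hc, mul_div_cancel₀ _ hc.ne'⟩
    · rw [lt_div_iff₀ hc]; linarith
    · rw [div_lt_iff₀ hc]; linarith

section Reaction

variable {ki kg lami lamg : ℝ}

theorem reaction_one : reaction ki kg lami lamg 1 = -kg := by
  unfold reaction; ring

theorem reaction_of_kg_eq_zero :
    reaction ki 0 lami lamg = fun u => u * (1 - u) * ((ki - lami + lamg)*u - (ki - lami)) := by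
  funext u; unfold reaction; ring

theorem exists_isBistable_reaction_iff {a b : ℝ} (ha : 0 < a) (hb : 0 < b) (hb₁ : b ≤ 1) :
    (∃ γ, a < γ ∧ γ < b ∧ IsBistable (reaction ki kg lami lamg) γ) ↔
      kg = 0 ∧ 0 < lamg ∧ (1 - b)/b < lamg/(ki - lami) ∧ lamg/(ki - lami) < (1 - a)/a := by
  have hroot := exists_root_mem_Ioo_iff (K := ki - lami) (l := lamg) ha hb hb₁
  constructor
  · rintro ⟨γ, haγ, hγb, hbist⟩
    have hkg : kg = 0 := by simpa [reaction_one] using hbist.2.1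
    subst hkg
    rw [reaction_of_kg_eq_zero, isBistable_cubic_iff ⟨by linarith, by linarith⟩] at hbist
    exact ⟨rfl, hroot.1 ⟨γ, haγ, hγb, hbist⟩⟩
  · rintro ⟨rfl, hlims⟩
    obtain ⟨γ, haγ, hγb, hγ⟩ := hroot.2 hlims
    refine ⟨γ, haγ, hγb, ?_⟩
    rwa [reaction_of_kg_eq_zero, isBistable_cubic_iff ⟨by linarith, by linarith⟩]

end Reaction

end JBMS

open JBMS

theorem JBMS_model_conditions_general
    (Di Dg ki kg lami lamg : ℝ)
    (hDi : 0 < Di) (hDg : 0 < Dg)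
    (D g : ℝ → ℝ)
    (hD : ∀ u, D u = Di * (1 - 4*u + 3*u^2) + Dg * (4*u - 3*u^2))
    (hg : ∀ u, g u = lamg * u * (1-u) + (lami - lamg - (ki - kg)) * u * (1-u)^2 - kg * u)
    (ω : ℝ) (hω : ω = Real.sqrt ((Di - 4*Dg) / (Di - Dg))) :
    -- (1)
    ((∃ α β : ℝ, 0 < α ∧ α < β ∧ β < 1 ∧
        (∀ u ∈ Ioo (0:ℝ) α ∪ Ioo β 1, 0 < D u) ∧
        (∀ u ∈ Ioo α β, D u < 0)) ↔ 4 * Dg < Di) ∧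
    (4 * Dg < Di →
      ω ∈ Ioo (0:ℝ) 1 ∧
      (∀ u ∈ Ioo (0:ℝ) (2/3 - ω/3) ∪ Ioo (2/3 + ω/3) 1, 0 < D u) ∧
      (∀ u ∈ Ioo (2/3 - ω/3) (2/3 + ω/3), D u < 0) ∧
      -- (2)
      ((∃ γ : ℝ, 2/3 - ω/3 < γ ∧ γ < 2/3 + ω/3 ∧
          g 0 = 0 ∧ g 1 = 0 ∧
          (∀ u ∈ Ioo (0:ℝ) γ, g u < 0) ∧ (∀ u ∈ Ioo γ 1, 0 < g u)) ↔
        (kg = 0 ∧ 0 < lamg ∧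
          (1 - ω)/(2 + ω) < lamg/(ki - lami) ∧
          lamg/(ki - lami) < (1 + ω)/(2 - ω)))) := by
  obtain rfl : D = diffusivity Di Dg := funext hD
  obtain rfl : g = reaction ki kg lami lamg := funext hg
  refine ⟨⟨fun ⟨α, β, hα, hαβ, hβ, _, hneg⟩ => ?_, fun h4 => ?_⟩, fun h4 => ?_⟩
  · exact four_mul_lt_of_diffusivity_neg hDi.le (u := (α + β)/2) (by linarith) (by linarith)
      (hneg _ ⟨by linarith, by linarith⟩)
  · obtain ⟨hω₀, hω₁⟩ := hω ▸ sqrt_ratio_mem_Ioo hDg h4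
    exact ⟨_, _, by linarith, by linarith, by linarith, diffusivity_sign_pattern hDg h4 hω⟩
  · obtain ⟨hω₀, hω₁⟩ := hω ▸ sqrt_ratio_mem_Ioo hDg h4
    obtain ⟨hpos, hneg⟩ := diffusivity_sign_pattern hDg h4 hω
    refine ⟨⟨hω₀, hω₁⟩, hpos, hneg, ?_⟩
    have hβ : (1 - (2/3 + ω/3)) / (2/3 + ω/3) = (1 - ω)/(2 + ω) := by
      field_simp; ring
    have hα : (1 - (2/3 - ω/3)) / (2/3 - ω/3) = (1 + ω)/(2 - ω) := by
      rw [div_eq_div_iff (by linarith) (by linarith)]; ring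
    rw [← hβ, ← hα]
    exact exists_isBistable_reaction_iff (by linarith) (by linarith) (by linarith)

/-- **Lemma 2.1**: for the Johnston–Baker–Maini–Simpson model diffusivity
`D(u) = D_i(1 − 4u + 3u²) + D_g(4u − 3u²)` and reaction
`g(u) = λ_g u(1−u) + [λ_i − λ_g − (k_i − k_g)] u(1−u)² − k_g u`:
(1) the forward–backward–forward sign pattern (P) holds for some
`0 < α < β < 1` iff `D_i > 4D_g > 0`, in which case `α = 2/3 − ω/3`,
`β = 2/3 + ω/3` with `ω = √((D_i − 4D_g)/(D_i − D_g)) ∈ (0,1)`;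
(2) in that case, `g` is bistable with interior zero `γ ∈ (α,β)` iff `k_g = 0`,
`λ_g > 0` and `(1−ω)/(2+ω) < λ_g/(k_i−λ_i) < (1+ω)/(2−ω)`. -/
theorem JBMS_model_conditions
    (Di Dg ki kg lami lamg : ℝ)
    (hDi : 0 < Di) (hDg : 0 < Dg) (hki : 0 < ki) (hkg : 0 ≤ kg)
    (hlami : 0 < lami) (hlamg : 0 ≤ lamg)
    (D g : ℝ → ℝ)
    (hD : ∀ u, D u = Di * (1 - 4*u + 3*u^2) + Dg * (4*u - 3*u^2))
    (hg : ∀ u, g u = lamg * u * (1-u) + (lami - lamg - (ki - kg)) * u * (1-u)^2 - kg * u)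
    (ω : ℝ) (hω : ω = Real.sqrt ((Di - 4*Dg) / (Di - Dg))) :
    -- (1)
    ((∃ α β : ℝ, 0 < α ∧ α < β ∧ β < 1 ∧
        (∀ u ∈ Ioo (0:ℝ) α ∪ Ioo β 1, 0 < D u) ∧
        (∀ u ∈ Ioo α β, D u < 0)) ↔ 4 * Dg < Di) ∧
    (4 * Dg < Di →
      ω ∈ Ioo (0:ℝ) 1 ∧
      (∀ u ∈ Ioo (0:ℝ) (2/3 - ω/3) ∪ Ioo (2/3 + ω/3) 1, 0 < D u) ∧
      (∀ u ∈ Ioo (2/3 - ω/3) (2/3 + ω/3), D u < 0) ∧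
      -- (2)
      ((∃ γ : ℝ, 2/3 - ω/3 < γ ∧ γ < 2/3 + ω/3 ∧
          g 0 = 0 ∧ g 1 = 0 ∧
          (∀ u ∈ Ioo (0:ℝ) γ, g u < 0) ∧ (∀ u ∈ Ioo γ 1, 0 < g u)) ↔
        (kg = 0 ∧ 0 < lamg ∧
          (1 - ω)/(2 + ω) < lamg/(ki - lami) ∧
          lamg/(ki - lami) < (1 + ω)/(2 - ω)))) :=
  JBMS_model_conditions_general Di Dg ki kg lami lamg hDi hDg D g hD hg ω hω
end

section
/- Let ω ∈ (0,1) and define P(u) := u³ − 2u² + ((4−ω²)/3)u, α := (2−ω)/3, β := (2+ω)/3, Δ_u := −3u² + 4u − 4/3 + 4ω²/3, η(u) := (2 − u + √Δ_u)/2, and I_ω as in the context. Then: (1) I_ω is a nonempty closed subinterval of [0,α]; (2) for every u ∈ I_ω one has Δ_u ≥ 0, η(u) ∈ [β,1], and P(η(u)) = P(u); (3) η is strictly increasing on I_ω, with η(I_ω) = [β, β + ω/3] if ω ∈ (0,1/2] and η(I_ω) = [β, 1] if ω ∈ (1/2,1); (4) conversely, if u ∈ [0,α], v ∈ [β,1]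 and P(u) = P(v), then u ∈ I_ω and v = η(u). -/
/-!
Since `P(v) - P(u) = (v - u)·Q(u, v)` with `Q` quadratic in `v`, a solution with `v ≠ u` satisfies
`(2v + u - 2)² = Δ_u`; the constraint `v ≥ β` forces `u ≥ α - ω/3` and selects the root
`v = η(u)`. The bound `η(u) ≤ 1` is equivalent to `u² - u + (1 - ω²)/3 ≥ 0`, which holds on all
of `[α - ω/3, α]` when `ω ≤ 1/2` and cuts it at the smaller root otherwise: this is `I_ω`.
Finally `η` increases because `√Δ_u < 2 - 3u` for `u < α`, and its image is an interval by the
intermediate value theorem.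
-/

open Set

namespace CubicJump

noncomputable def pot (ω u : ℝ) : ℝ := u^3 - 2*u^2 + ((4 - ω^2)/3)*u

noncomputable def disc (ω u : ℝ) : ℝ := -3*u^2 + 4*u - 4/3 + 4*ω^2/3

noncomputable def eta (ω u : ℝ) : ℝ := (2 - u + √(disc ω u))/2

variable {ω u v b c : ℝ}

theorem pot_sub_pot (ω u v : ℝ) :
    pot ω v - pot ω u = (v - u) * (u^2 + u*v + v^2 - 2*u - 2*v + (4 - ω^2)/3) := by
  unfold pot; ring

theorem disc_eq_mul (ω u : ℝ) : disc ω u = 3 * (u - (2 - 2*ω)/3) * ((2 + 2*ω)/3 - u) := by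
  unfold disc; ring

theorem disc_nonneg_iff (hω : 0 ≤ ω) :
    0 ≤ disc ω u ↔ u ∈ Icc ((2 - 2*ω)/3) ((2 + 2*ω)/3) := by
  rw [disc_eq_mul]
  constructor
  · intro h
    by_contra hu
    rw [mem_Icc, not_and_or, not_le, not_le] at hu
    rcases hu with hu | hu <;> nlinarith
  · rintro ⟨h₁, h₂⟩
    have := mul_nonneg (sub_nonneg.2 h₁) (sub_nonneg.2 h₂)
    linarith

theorem disc_eq_sq_of_pot_eq (huv : u ≠ v) (h : pot ω u = pot ω v) :
    disc ω u = (2*v + u - 2)^2 := by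
  have hQ : u^2 + u*v + v^2 - 2*u - 2*v + (4 - ω^2)/3 = 0 := by
    have := pot_sub_pot ω u v
    rw [h, sub_self, eq_comm, mul_eq_zero] at this
    exact this.resolve_left (sub_ne_zero.2 huv.symm)
  unfold disc
  linear_combination (-4) * hQ

theorem pot_eta (h : 0 ≤ disc ω u) : pot ω (eta ω u) = pot ω u := by
  have hs : √(disc ω u)^2 = disc ω u := Real.sq_sqrt h
  rw [eta]
  generalize √(disc ω u) = s at hs
  unfold pot
  unfold disc at hs
  linear_combination ((2 - u + s)/2 - u)/4 * hs

/-- The condition `η(u) ≤ 1` reads `√Δ_u ≤ u`, and `u² - Δ_u` is four times this quadratic. -/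
theorem eta_le_one_iff (hu : 0 ≤ u) : eta ω u ≤ 1 ↔ 0 ≤ u^2 - u + (1 - ω^2)/3 := by
  have : eta ω u ≤ 1 ↔ √(disc ω u) ≤ u := by unfold eta; constructor <;> intro <;> linarith
  rw [this, Real.sqrt_le_left hu]
  unfold disc
  constructor <;> intro <;> linarith

theorem eta_eq_one (hu : 0 ≤ u) (hq : u^2 - u + (1 - ω^2)/3 = 0) : eta ω u = 1 := by
  have : disc ω u = u^2 := by unfold disc; linear_combination (-4) * hq
  rw [eta, this, Real.sqrt_sq hu]
  ring

theorem le_eta (hu : u ∈ Icc ((2 - 2*ω)/3) ((2 + ω)/3)) :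
    (2 + ω)/3 ≤ eta ω u := by
  have h : (u - (2 - 2*ω)/3)^2 ≤ disc ω u := by
    rw [disc_eq_mul]
    nlinarith [mul_nonneg (sub_nonneg.2 hu.1) (sub_nonneg.2 hu.2)]
  have := Real.le_sqrt_of_sq_le h
  unfold eta
  linarith

theorem eta_left (ω : ℝ) : eta ω ((2 - 2*ω)/3) = (2 + ω)/3 := by
  rw [eta, disc_eq_mul]
  norm_num
  ring

theorem eta_right (hω : 0 ≤ ω) : eta ω ((2 - ω)/3) = (2 + ω)/3 + ω/3 := by
  have : disc ω ((2 - ω)/3) = ω^2 := by unfold disc; ring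
  rw [eta, this, Real.sqrt_sq hω]
  ring

theorem continuous_eta (ω : ℝ) : Continuous (eta ω) := by
  unfold eta disc; fun_prop

/-- Where `u` is left of `α`, `2 - 3u` dominates `√Δ_u`: this is what makes `η` increase. -/
theorem sq_sub_disc (ω u : ℝ) :
    (2 - 3*u)^2 - disc ω u = 12 * ((2 - ω)/3 - u) * ((2 + ω)/3 - u) := by
  unfold disc; ring

theorem sqrt_disc_le (hω : 0 ≤ ω) (hu : u ≤ (2 - ω)/3) : √(disc ω u) ≤ 2 - 3*u := by
  rw [Real.sqrt_le_left (by linarith)]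
  have := sq_sub_disc ω u
  nlinarith [mul_nonneg (sub_nonneg.2 hu) (show 0 ≤ (2 + ω)/3 - u by linarith)]

theorem sqrt_disc_lt (hω : 0 ≤ ω) (hu : u < (2 - ω)/3) : √(disc ω u) < 2 - 3*u := by
  rw [Real.sqrt_lt' (by linarith)]
  have := sq_sub_disc ω u
  nlinarith [mul_pos (sub_pos.2 hu) (show 0 < (2 + ω)/3 - u by linarith)]

theorem strictMonoOn_eta (hω : 0 ≤ ω) :
    StrictMonoOn (eta ω) (Icc ((2 - 2*ω)/3) ((2 - ω)/3)) := by
  intro u hu u' hu' huu'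
  have hs : √(disc ω u)^2 = disc ω u :=
    Real.sq_sqrt ((disc_nonneg_iff hω).2 ⟨hu.1, by linarith [hu.2]⟩)
  have hs' : √(disc ω u')^2 = disc ω u' :=
    Real.sq_sqrt ((disc_nonneg_iff hω).2 ⟨hu'.1, by linarith [hu'.2]⟩)
  have hlt := sqrt_disc_lt hω (huu'.trans_le hu'.2)
  have hle := sqrt_disc_le hω hu'.2
  have hdiff : √(disc ω u')^2 - √(disc ω u)^2 = (u' - u) * (4 - 3*u - 3*u') := by
    rw [hs, hs']; unfold disc; ring
  have h0 := Real.sqrt_nonneg (disc ω u)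
  have h0' := Real.sqrt_nonneg (disc ω u')
  unfold eta
  nlinarith

theorem eta_image_Icc (hω : 0 ≤ ω) (hab : (2 - 2*ω)/3 ≤ b) (hb : b ≤ (2 - ω)/3) :
    eta ω '' Icc ((2 - 2*ω)/3) b = Icc ((2 + ω)/3) (eta ω b) := by
  rw [(continuous_eta ω).continuousOn.image_Icc_of_monotoneOn hab
    ((strictMonoOn_eta hω).monotoneOn.mono (Icc_subset_Icc_right hb)), eta_left]

theorem mem_Icc_and_eq_eta_of_pot_eq (hω : 0 < ω)
    (hb : ∀ u ∈ Icc ((2 - 2*ω)/3) ((2 - ω)/3), u ≤ b ↔ 0 ≤ u^2 - u + (1 - ω^2)/3)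
    (hu : u ∈ Icc 0 ((2 - ω)/3)) (hv : v ∈ Icc ((2 + ω)/3) 1) (h : pot ω u = pot ω v) :
    u ∈ Icc ((2 - 2*ω)/3) b ∧ v = eta ω u := by
  have hsq := disc_eq_sq_of_pot_eq (show u < v by linarith [hu.2, hv.1]).ne h
  have hleft : (2 - 2*ω)/3 ≤ u := ((disc_nonneg_iff hω.le).1 (hsq ▸ sq_nonneg _)).1
  have hv_eq : v = eta ω u := by
    rw [eta, hsq, Real.sqrt_sq (by linarith [hv.1])]
    ring
  refine ⟨⟨hleft, (hb u ⟨hleft, hu.2⟩).2 ((eta_le_one_iff hu.1).1 (hv_eq ▸ hv.2))⟩, hv_eq⟩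

theorem admissible_pairs_Icc (hω : 0 < ω) (hω₁ : ω ≤ 1) (hbα : b ≤ (2 - ω)/3)
    (hb : ∀ u ∈ Icc ((2 - 2*ω)/3) ((2 - ω)/3), u ≤ b ↔ 0 ≤ u^2 - u + (1 - ω^2)/3) :
    ((Icc ((2 - 2*ω)/3) b).Nonempty ∧ IsClosed (Icc ((2 - 2*ω)/3) b) ∧
      (Icc ((2 - 2*ω)/3) b).OrdConnected ∧ Icc ((2 - 2*ω)/3) b ⊆ Icc 0 ((2 - ω)/3)) ∧
    (∀ u ∈ Icc ((2 - 2*ω)/3) b,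
      0 ≤ disc ω u ∧ eta ω u ∈ Icc ((2 + ω)/3) 1 ∧ pot ω (eta ω u) = pot ω u) ∧
    (StrictMonoOn (eta ω) (Icc ((2 - 2*ω)/3) b) ∧
      eta ω '' Icc ((2 - 2*ω)/3) b = Icc ((2 + ω)/3) (eta ω b)) ∧
    (∀ u ∈ Icc (0:ℝ) ((2 - ω)/3), ∀ v ∈ Icc ((2 + ω)/3) 1, pot ω u = pot ω v →
      u ∈ Icc ((2 - 2*ω)/3) b ∧ v = eta ω u) := by
  have hab : (2 - 2*ω)/3 ≤ b :=
    (hb _ ⟨le_rfl, by linarith⟩).2 (by nlinarith [sq_nonneg (1 - ω)])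
  have hsub : Icc ((2 - 2*ω)/3) b ⊆ Icc ((2 - 2*ω)/3) ((2 - ω)/3) := Icc_subset_Icc_right hbα
  refine ⟨⟨nonempty_Icc.2 hab, isClosed_Icc, ordConnected_Icc,
      Icc_subset_Icc (by linarith) hbα⟩, fun u hu => ?_,
    ⟨(strictMonoOn_eta hω.le).mono hsub, eta_image_Icc hω.le hab hbα⟩,
    fun u hu v hv => mem_Icc_and_eq_eta_of_pot_eq hω hb hu hv⟩
  have hdisc : 0 ≤ disc ω u := (disc_nonneg_iff hω.le).2 ⟨hu.1, by linarith [hu.2]⟩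
  refine ⟨hdisc, ⟨le_eta ⟨hu.1, by linarith [hu.2]⟩, ?_⟩, pot_eta hdisc⟩
  exact (eta_le_one_iff (by linarith [hu.1])).2 ((hb u (hsub hu)).1 hu.2)

/-- For `ω > 1/2` the right end of `I_ω` is the smaller root `1/2 - c` of the quadratic, with
`c = √(4ω² - 1)/(2√3)`. -/
theorem smaller_root_spec (hω : 1/2 < ω) (hω₁ : ω ≤ 1) (hc₀ : 0 ≤ c)
    (hc : c^2 = (4*ω^2 - 1)/12) :
    1/2 - c ≤ (2 - ω)/3 ∧
    (∀ u ∈ Icc ((2 - 2*ω)/3) ((2 - ω)/3), u ≤ 1/2 - c ↔ 0 ≤ u^2 - u + (1 - ω^2)/3) ∧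
    eta ω (1/2 - c) = 1 := by
  refine ⟨by nlinarith, fun u hu => ?_, eta_eq_one (by nlinarith) (by linear_combination hc)⟩
  have hu' : 0 ≤ 1/2 - u := by linarith [hu.2]
  rw [show u ≤ 1/2 - c ↔ c ≤ 1/2 - u by constructor <;> intro <;> linarith,
    ← pow_le_pow_iff_left₀ hc₀ hu' two_ne_zero]
  constructor <;> intro <;> nlinarith

end CubicJump

open CubicJump in
/-- **Proposition 2.2 (admissible jumps for the cubic potential)**: with
`P(u) = u³ − 2u² + ((4−ω²)/3)u`, `α = (2−ω)/3`, `β = (2+ω)/3`,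
`Δ_u = −3u² + 4u − 4/3 + 4ω²/3`, `η(u) = (2 − u + √Δ_u)/2` and `I_ω` as
specified: `I_ω` is a nonempty closed subinterval of `[0,α]`; for `u ∈ I_ω`,
`Δ_u ≥ 0`, `η(u) ∈ [β,1]` and `P(η(u)) = P(u)`; `η` is strictly increasing
on `I_ω` with image `[β, β + ω/3]` if `ω ≤ 1/2` and `[β,1]` if `ω > 1/2`;
conversely every solution of `P(u) = P(v)`, `u ∈ [0,α]`, `v ∈ [β,1]` is of
this form. -/
theorem eta_admissible_pairs_cubic
    (ω : ℝ) (hω : ω ∈ Ioo (0:ℝ) 1)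
    (α β : ℝ) (hα : α = (2 - ω)/3) (hβ : β = (2 + ω)/3)
    (P : ℝ → ℝ) (hP : ∀ u, P u = u^3 - 2*u^2 + ((4 - ω^2)/3)*u)
    (Δ : ℝ → ℝ) (hΔ : ∀ u, Δ u = -3*u^2 + 4*u - 4/3 + 4*ω^2/3)
    (η : ℝ → ℝ) (hη : ∀ u, η u = (2 - u + Real.sqrt (Δ u))/2)
    (Iω : Set ℝ)
    (hIω : (ω ≤ 1/2 → Iω = Icc (α - ω/3) α) ∧
      (1/2 < ω → Iω = Icc (α - ω/3) (1/2 - Real.sqrt (4*ω^2 - 1)/(2*Real.sqrt 3)))) :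
    -- (1)
    (Iω.Nonempty ∧ IsClosed Iω ∧ Iω.OrdConnected ∧ Iω ⊆ Icc 0 α) ∧
    -- (2)
    (∀ u ∈ Iω, 0 ≤ Δ u ∧ η u ∈ Icc β 1 ∧ P (η u) = P u) ∧
    -- (3)
    (StrictMonoOn η Iω ∧
      (ω ≤ 1/2 → η '' Iω = Icc β (β + ω/3)) ∧
      (1/2 < ω → η '' Iω = Icc β 1)) ∧
    -- (4)
    (∀ u ∈ Icc (0:ℝ) α, ∀ v ∈ Icc β 1, P u = P v → u ∈ Iω ∧ v = η u) := by
  obtain ⟨hω₀, hω₁⟩ := hω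
  obtain rfl : P = pot ω := funext hP
  obtain rfl : Δ = disc ω := funext hΔ
  obtain rfl : η = eta ω := funext hη
  subst hα hβ
  have hleft : (2 - ω)/3 - ω/3 = (2 - 2*ω)/3 := by ring
  rcases le_or_gt ω (1/2) with hsmall | hlarge
  · rw [hIω.1 hsmall, hleft]
    obtain ⟨H₁, H₂, ⟨H₃, himage⟩, H₄⟩ := admissible_pairs_Icc hω₀ hω₁.le le_rfl
      fun u hu => iff_of_true hu.2 (by nlinarith [sq_nonneg (u - 1/2)])
    rw [eta_right hω₀.le] at himage
    exact ⟨H₁, H₂, ⟨H₃, fun _ => himage, fun h => absurd hsmall h.not_ge⟩, H₄⟩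
  · have hc : (√(4*ω^2 - 1)/(2*√3))^2 = (4*ω^2 - 1)/12 := by
      rw [div_pow, mul_pow, Real.sq_sqrt (by nlinarith), Real.sq_sqrt (by norm_num)]
      ring
    obtain ⟨hbα, hb, hη₁⟩ := smaller_root_spec hlarge hω₁.le (by positivity) hc
    rw [hIω.2 hlarge, hleft]
    obtain ⟨H₁, H₂, ⟨H₃, himage⟩, H₄⟩ := admissible_pairs_Icc hω₀ hω₁.le hbα hb
    rw [hη₁] at himage
    exact ⟨H₁, H₂, ⟨H₃, fun h => absurd hlarge h.not_gt, fun _ => himage⟩, H₄⟩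
end

section
/- Let ω ∈ (0,1) and define D(u) := 3u² − 4u + (4−ω²)/3 (so D = P'), with η and I_ω as in the context. Then for u ∈ I_ω the equation D(u) = D(η(u)) holds if and only if u = 2/3 − ω/√3; moreover the point 2/3 − ω/√3 belongs to I_ω if and only if ω ∈ (0, 1/√3]. Consequently, if ω ∈ (0, 1/√3] there is exactly one u ∈ I_ω with D(u) = D(η(u)), and if ω ∈ (1/√3, 1) there is none. -/
/-!
`D` is a parabola symmetric about `2/3`, so `D u = D v` exactly when `v = u` or `u + v = 4/3`.
On `I_ω` every `u` lies below `2/3 ≤ η u`, so only the second alternative can occur, and it says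
`√Δ(u) = 2/3 - u`. Since `Δ(u) = 4ω²/3 - 3(u - 2/3)²`, this is `(2/3 - u)² = ω²/3`, whose only root
below `2/3` is `2/3 - ω/√3`.

With `t = ω/√3`, the lower end `(2 - 2ω)/3` of `I_ω` lies below `2/3 - t` because `3/2 ≤ √3`,
and for `ω ≤ 1/2` (where also `ω < 1/√3`) the upper end `α` lies above it because `√3 ≤ 3`.
For `ω > 1/2` the upper end is `1/2 - √(t² - 1/12)`, and `√(t² - 1/12) ≤ t - 1/6` reduces to `t ≤ 1/3`, i.e. `ω ≤ 1/√3`.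
-/

open Set Real

noncomputable section

def cubicDiffusivity (ω u : ℝ) : ℝ := 3 * u ^ 2 - 4 * u + (4 - ω ^ 2) / 3

def cubicDiscriminant (ω u : ℝ) : ℝ := -3 * u ^ 2 + 4 * u - 4 / 3 + 4 * ω ^ 2 / 3

def cubicEta (ω u : ℝ) : ℝ := (2 - u + √(cubicDiscriminant ω u)) / 2

theorem cubicDiffusivity_eq_iff {ω u v : ℝ} :
    cubicDiffusivity ω u = cubicDiffusivity ω v ↔ u = v ∨ u + v = 4 / 3 := by
  have hfactor : cubicDiffusivity ω u - cubicDiffusivity ω v = (u - v) * (3 * (u + v) - 4) := by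
    unfold cubicDiffusivity; ring
  rw [← sub_eq_zero, hfactor, mul_eq_zero, sub_eq_zero, sub_eq_zero]
  constructor <;> rintro (h | h) <;> first | exact Or.inl h | (right; linarith)

theorem cubicDiffusivity_eq_cubicEta_iff {ω u : ℝ} (hω : 0 ≤ ω) (hu : u < 2 / 3) :
    cubicDiffusivity ω u = cubicDiffusivity ω (cubicEta ω u) ↔ u = 2 / 3 - ω / √3 := by
  have hne : u ≠ cubicEta ω u := by
    have := sqrt_nonneg (cubicDiscriminant ω u)
    unfold cubicEta; intro h; linarith
  have hsum : u + cubicEta ω u = 4 / 3 ↔ √(cubicDiscriminant ω u) = 2 / 3 - u := by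
    unfold cubicEta; constructor <;> intro h <;> linarith
  have hω3 : (ω / √3) ^ 2 = ω ^ 2 / 3 := by rw [div_pow, sq_sqrt (by norm_num)]
  rw [cubicDiffusivity_eq_iff, or_iff_right hne, hsum,
    sqrt_eq_iff_mul_self_eq_of_pos (by linarith), cubicDiscriminant]
  calc (2 / 3 - u) * (2 / 3 - u) = -3 * u ^ 2 + 4 * u - 4 / 3 + 4 * ω ^ 2 / 3
      ↔ (2 / 3 - u) ^ 2 = (ω / √3) ^ 2 := by
        rw [hω3]; constructor <;> intro h <;> linarith
    _ ↔ 2 / 3 - u = ω / √3 := sq_eq_sq₀ (by linarith) (by positivity)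
    _ ↔ u = 2 / 3 - ω / √3 := by constructor <;> intro h <;> linarith

theorem sqrt_three_mem_Icc : √3 ∈ Icc (3 / 2 : ℝ) 2 := by
  have h3 : √3 ^ 2 = 3 := sq_sqrt (by norm_num)
  have hpos : 0 < √3 := by positivity
  constructor <;> nlinarith

theorem div_sqrt_three_mem_Icc {ω : ℝ} (hω : 0 ≤ ω) : ω / √3 ∈ Icc (ω / 3) (2 * ω / 3) := by
  obtain ⟨hlow, hup⟩ := sqrt_three_mem_Icc
  have hpos : 0 < √3 := by positivity
  constructor
  · exact div_le_div_of_nonneg_left hω hpos (by linarith)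
  · rw [div_le_iff₀ hpos]; nlinarith

theorem le_inv_sqrt_three_iff {ω : ℝ} : ω ≤ 1 / √3 ↔ ω / √3 ≤ 1 / 3 := by
  have hpos : 0 < √3 := by positivity
  have h3 : √3 * √3 = 3 := mul_self_sqrt (by norm_num)
  rw [le_div_iff₀ hpos, div_le_iff₀ hpos]
  constructor <;> intro h <;> nlinarith

theorem sqrt_sq_sub_le_sub_iff {t : ℝ} (ht : 1 / 6 ≤ t) : √(t ^ 2 - 1 / 12) ≤ t - 1 / 6 ↔ t ≤ 1 / 3 := by
  rw [sqrt_le_left (by linarith)]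
  constructor <;> intro h <;> nlinarith

theorem sqrt_four_sq_sub_one_div_two_sqrt_three {ω : ℝ} :
    √(4 * ω ^ 2 - 1) / (2 * √3) = √((ω / √3) ^ 2 - 1 / 12) := by
  have h12 : 2 * √3 = √12 := by
    rw [show (12 : ℝ) = 2 ^ 2 * 3 by norm_num, sqrt_mul (by norm_num), sqrt_sq (by norm_num)]
  rw [h12, ← sqrt_div' _ (by norm_num), div_pow, sq_sqrt (by norm_num)]
  congr 1; ring

theorem two_thirds_sub_div_sqrt_three_mem_Icc {ω : ℝ} (hω : 0 ≤ ω) :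
    2 / 3 - ω / √3 ∈ Icc ((2 - ω) / 3 - ω / 3) ((2 - ω) / 3) := by
  obtain ⟨hlow, hup⟩ := div_sqrt_three_mem_Icc hω
  constructor <;> linarith

theorem two_thirds_sub_div_sqrt_three_mem_Icc_iff {ω : ℝ} (hω : 1 / 2 < ω) :
    2 / 3 - ω / √3 ∈ Icc ((2 - ω) / 3 - ω / 3) (1 / 2 - √(4 * ω ^ 2 - 1) / (2 * √3)) ↔
      ω ≤ 1 / √3 := by
  obtain ⟨hlow, hup⟩ := div_sqrt_three_mem_Icc (ω := ω) (by linarith)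
  rw [le_inv_sqrt_three_iff, ← sqrt_sq_sub_le_sub_iff (by linarith),
    sqrt_four_sq_sub_one_div_two_sqrt_three, mem_Icc]
  constructor
  · rintro ⟨-, h⟩; linarith
  · intro h; constructor <;> linarith

theorem continuous_diffusivity_rule_cubic_general
    (ω : ℝ) (hω : ω ∈ Ioo (0:ℝ) 1)
    (α : ℝ) (hα : α = (2 - ω)/3)
    (D : ℝ → ℝ) (hD : ∀ u, D u = 3*u^2 - 4*u + (4 - ω^2)/3)
    (Δ : ℝ → ℝ) (hΔ : ∀ u, Δ u = -3*u^2 + 4*u - 4/3 + 4*ω^2/3)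
    (η : ℝ → ℝ) (hη : ∀ u, η u = (2 - u + Real.sqrt (Δ u))/2)
    (Iω : Set ℝ)
    (hIω : (ω ≤ 1/2 → Iω = Icc (α - ω/3) α) ∧
      (1/2 < ω → Iω = Icc (α - ω/3) (1/2 - Real.sqrt (4*ω^2 - 1)/(2*Real.sqrt 3)))) :
    (∀ u ∈ Iω, (D u = D (η u) ↔ u = 2/3 - ω/Real.sqrt 3)) ∧
    ((2/3 - ω/Real.sqrt 3) ∈ Iω ↔ ω ≤ 1/Real.sqrt 3) ∧
    (ω ≤ 1/Real.sqrt 3 → ∃! u : ℝ, u ∈ Iω ∧ D u = D (η u)) ∧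
    (1/Real.sqrt 3 < ω → ¬ ∃ u : ℝ, u ∈ Iω ∧ D u = D (η u)) := by
  obtain ⟨hω0, hω1⟩ := hω
  obtain rfl : D = cubicDiffusivity ω := funext hD
  obtain rfl : η = cubicEta ω := funext fun u => by rw [hη, hΔ, cubicEta, cubicDiscriminant]
  subst hα
  have hlt : ∀ u ∈ Iω, u < 2 / 3 := by
    intro u hu
    rcases le_or_gt ω (1 / 2) with h | h
    · rw [hIω.1 h] at hu; linarith [hu.2]
    · rw [hIω.2 h] at hu
      have : 0 ≤ √(4 * ω ^ 2 - 1) / (2 * √3) := by positivity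
      linarith [hu.2]
  have key : ∀ u ∈ Iω, (cubicDiffusivity ω u = cubicDiffusivity ω (cubicEta ω u) ↔
      u = 2 / 3 - ω / √3) := fun u hu => cubicDiffusivity_eq_cubicEta_iff hω0.le (hlt u hu)
  have hmem : 2 / 3 - ω / √3 ∈ Iω ↔ ω ≤ 1 / √3 := by
    rcases le_or_gt ω (1 / 2) with h | h
    · have hhalf : (1 / 2 : ℝ) ≤ 1 / √3 := one_div_le_one_div_of_le (by positivity)
        (by linarith [sqrt_three_mem_Icc.2])
      rw [hIω.1 h]
      exact iff_of_true (two_thirds_sub_div_sqrt_three_mem_Icc hω0.le) (h.trans hhalf)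
    · rw [hIω.2 h]; exact two_thirds_sub_div_sqrt_three_mem_Icc_iff h
  refine ⟨key, hmem, fun hle => ?_, ?_⟩
  · have ha := hmem.2 hle
    exact ⟨_, ⟨ha, (key _ ha).2 rfl⟩, fun v ⟨hv, hDv⟩ => (key v hv).1 hDv⟩
  · rintro hgt ⟨u, hu, hDu⟩
    rw [(key u hu).1 hDu, hmem] at hu
    exact hgt.not_ge hu

/-- **Proposition 2.3 (continuous-diffusivity rule for the cubic model)**: with
`D(u) = 3u² − 4u + (4−ω²)/3`, `η` and `I_ω` as specified, for `u ∈ I_ω` one has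
`D(u) = D(η(u))` iff `u = 2/3 − ω/√3`; this point lies in `I_ω` iff
`ω ≤ 1/√3`. Hence for `ω ∈ (0, 1/√3]` there is exactly one `u ∈ I_ω` with
`D(u) = D(η(u))`, and for `ω ∈ (1/√3, 1)` there is none. -/
theorem continuous_diffusivity_rule_cubic
    (ω : ℝ) (hω : ω ∈ Ioo (0:ℝ) 1)
    (α β : ℝ) (hα : α = (2 - ω)/3) (hβ : β = (2 + ω)/3)
    (D : ℝ → ℝ) (hD : ∀ u, D u = 3*u^2 - 4*u + (4 - ω^2)/3)
    (Δ : ℝ → ℝ) (hΔ : ∀ u, Δ u = -3*u^2 + 4*u - 4/3 + 4*ω^2/3)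
    (η : ℝ → ℝ) (hη : ∀ u, η u = (2 - u + Real.sqrt (Δ u))/2)
    (Iω : Set ℝ)
    (hIω : (ω ≤ 1/2 → Iω = Icc (α - ω/3) α) ∧
      (1/2 < ω → Iω = Icc (α - ω/3) (1/2 - Real.sqrt (4*ω^2 - 1)/(2*Real.sqrt 3)))) :
    (∀ u ∈ Iω, (D u = D (η u) ↔ u = 2/3 - ω/Real.sqrt 3)) ∧
    ((2/3 - ω/Real.sqrt 3) ∈ Iω ↔ ω ≤ 1/Real.sqrt 3) ∧
    (ω ≤ 1/Real.sqrt 3 → ∃! u : ℝ, u ∈ Iω ∧ D u = D (η u)) ∧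
    (1/Real.sqrt 3 < ω → ¬ ∃ u : ℝ, u ∈ Iω ∧ D u = D (η u)) :=
  continuous_diffusivity_rule_cubic_general ω hω α hα D hD Δ hΔ η hη Iω hIω
end
end
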